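/- arXiv:2405.05375 — 7 statements merged into one kernel-verified Lean document; each statement's English description precedes it below -/
import Mathlib

section
/- Every path with at least three edges is universal product antimagic. -/
open scoped Classical

noncomputable def edgeFS {V : Type*} [Fintype V] (G : SimpleGraph V) : Finset (Sym2 V) :=
  G.edgeSet.toFinset

noncomputable def vSum {V : Type*} [Fintype V] (G : SimpleGraph V) (φ : Sym2 V → ℝ) (v : V) : ℝ :=
  ∑ e ∈ (edgeFS G).filter (fun e => v ∈ e), φ e

noncomputable def vProd {V : Type*} [Fintype V] (G : SimpleGraph V) (φ : Sym2 V → ℝ) (v : V) : ℝ :=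
  ∏ e ∈ (edgeFS G).filter (fun e => v ∈ e), φ e

/-- `G` has a product antimagic `L`-labeling for every set `L` of `(edgeFS G).card`
reals, all at least `1`. -/
def UnivProdAntimagic {V : Type*} [Fintype V] (G : SimpleGraph V) : Prop :=
  ∀ L : Finset ℝ, (∀ x ∈ L, 1 ≤ x) → L.card = (edgeFS G).card →
    ∃ φ : Sym2 V → ℝ, Set.BijOn φ ↑(edgeFS G) ↑L ∧ Function.Injective (vProd G φ)

namespace Stmt4

def W (m : ℕ) (f : ℕ → ℝ) (k : ℕ) : ℝ :=
  if k = 0 then f 0 else if k = m then f (m-1) else f (k-1) * f k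

lemma tlem (m : ℕ) (hm : 2 ≤ m) :
    ∃ t : ℕ → ℕ, (∀ i < m, t i < m) ∧ (∀ k < m, ∃ i < m, t i = k) ∧
      (∀ i j, i < m → j < m → t i = t j → i = j) ∧
      (∀ i, i + 2 < m → t i < t (i + 2)) ∧
      (t (m-1) < t 0 ∨ t (m-1) < t 1) := by
  set p := (m-1) % 2 with hp
  set h := (m + 1 - p) / 2 with hh
  refine ⟨fun j => if j % 2 = p then j / 2 else h + j / 2, ?_, ?_, ?_, ?_, ?_⟩
  · intro i hi; dsimp only; split_ifs <;> omega
  · intro k hk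
    by_cases hkh : k < h
    · refine ⟨2*k + p, by omega, ?_⟩
      dsimp only; split_ifs <;> omega
    · refine ⟨2*(k-h) + (1-p), by omega, ?_⟩
      dsimp only; split_ifs <;> omega
  · intro i j hi hj; dsimp only; split_ifs <;> omega
  · intro i hi; dsimp only; split_ifs <;> omega
  · dsimp only; split_ifs <;> omega

lemma Winj (m : ℕ) (hm : 2 ≤ m) (f : ℕ → ℝ)
    (hpos : ∀ i < m, 1 < f i)
    (hstep : ∀ i, i + 2 < m → f i < f (i + 2))
    (hlast : f (m-1) < f 0 * f 1)
    (hne : f 0 ≠ f (m-1)) :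
    (∀ k ≤ m, 1 < W m f k) ∧ (∀ k l, k ≤ m → l ≤ m → W m f k = W m f l → k = l) := by
  have hWpos : ∀ k ≤ m, 1 < W m f k := by
    intro k hk
    unfold W
    split_ifs with h0 h1
    · exact hpos 0 (by omega)
    · exact hpos (m-1) (by omega)
    · have a1 := hpos (k-1) (by omega)
      have a2 := hpos k (by omega)
      nlinarith
  have hWstep : ∀ k, 1 ≤ k → k + 1 ≤ m - 1 → W m f k < W m f (k+1) := by
    intro k hk1 hk2
    unfold W
    rw [if_neg (by omega), if_neg (by omega), if_neg (by omega), if_neg (by omega)]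
    have h1 := hstep (k-1) (by omega)
    have h2 := hpos k (by omega)
    have h3 := hpos (k-1) (by omega)
    have hk' : k - 1 + 2 = k + 1 := by omega
    rw [hk'] at h1
    have : (k+1) - 1 = k := by omega
    rw [this]
    nlinarith
  have hWmono : ∀ k l, 1 ≤ k → k ≤ l → l ≤ m - 1 → W m f k ≤ W m f l := by
    intro k l hk hkl
    induction l, hkl using Nat.le_induction with
    | base => intro _; exact le_refl _
    | succ l hkl ih =>
      intro hl
      exact (ih (by omega)).trans (hWstep l (by omega) (by omega)).le
  have hW01 : W m f 0 < W m f 1 := by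
    unfold W
    rw [if_pos rfl, if_neg (by omega), if_neg (by omega)]
    have h1 := hpos 0 (by omega)
    have h2 := hpos 1 (by omega)
    norm_num
    nlinarith
  have hWm1 : W m f m < W m f 1 := by
    unfold W
    rw [if_neg (by omega), if_pos rfl, if_neg (by omega), if_neg (by omega)]
    norm_num
    exact hlast
  have hW0m : W m f 0 ≠ W m f m := by
    unfold W
    rw [if_pos rfl, if_neg (by omega), if_pos rfl]
    exact hne
  have key : ∀ k l, k < l → l ≤ m → W m f k ≠ W m f l := by
    intro k l hkl hl
    rcases Nat.eq_zero_or_pos k with rfl | hk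
    · rcases eq_or_lt_of_le hl with rfl | hl'
      · exact hW0m
      · exact ne_of_lt (lt_of_lt_of_le hW01 (hWmono 1 l (by omega) (by omega) (by omega)))
    · rcases eq_or_lt_of_le hl with rfl | hl'
      · exact (ne_of_lt (lt_of_lt_of_le hWm1 (hWmono 1 k (by omega) (by omega) (by omega)))).symm
      · exact ne_of_lt (lt_of_le_of_lt (hWmono k (l-1) (by omega) (by omega) (by omega))
          (by have := hWstep (l-1) (by omega) (by omega); rwa [Nat.sub_add_cancel (by omega)] at this))
  refine ⟨hWpos, ?_⟩
  intro k l hk hl heq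
  by_contra hne'
  rcases Nat.lt_or_ge k l with h | h
  · exact key k l h hl heq
  · exact key l k (by omega) hk heq.symm

lemma core (m : ℕ) (hm : 2 ≤ m) (a : ℕ → ℝ)
    (ha : ∀ i j : ℕ, i < j → j < m → a i < a j) (h1 : ∀ i < m, 1 < a i) :
    ∃ t : ℕ → ℕ, (∀ i < m, t i < m) ∧ (∀ k < m, ∃ i < m, t i = k) ∧
      (∀ i j, i < m → j < m → t i = t j → i = j) ∧
      (∀ k ≤ m, 1 < W m (fun i => a (t i)) k) ∧
      (∀ k l, k ≤ m → l ≤ m →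
        W m (fun i => a (t i)) k = W m (fun i => a (t i)) l → k = l) := by
  obtain ⟨t, hmap, hsurj, hinj, hstep, hlast⟩ := tlem m hm
  set f : ℕ → ℝ := fun i => a (t i) with hf
  have hfpos : ∀ i < m, 1 < f i := fun i hi => h1 _ (hmap i hi)
  have hfstep : ∀ i, i + 2 < m → f i < f (i+2) :=
    fun i hi => ha _ _ (hstep i hi) (hmap _ hi)
  have hflast : f (m-1) < f 0 * f 1 := by
    have p0 := h1 _ (hmap 0 (by omega))
    have p1 := h1 _ (hmap 1 (by omega))
    rcases hlast with hc | hc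
    · have h0 : a (t (m-1)) < a (t 0) := ha _ _ hc (hmap 0 (by omega))
      simp only [hf]; nlinarith
    · have h0 : a (t (m-1)) < a (t 1) := ha _ _ hc (hmap 1 (by omega))
      simp only [hf]; nlinarith
  have hfne : f 0 ≠ f (m-1) := by
    have ht : t 0 ≠ t (m-1) := by
      intro hcon
      have := hinj 0 (m-1) (by omega) (by omega) hcon
      omega
    rcases Nat.lt_or_ge (t 0) (t (m-1)) with h | h
    · exact ne_of_lt (ha _ _ h (hmap (m-1) (by omega)))
    · exact (ne_of_lt (ha _ _ (by omega) (hmap 0 (by omega)))).symm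
  obtain ⟨hWpos, hWinj⟩ := Winj m hm f hfpos hfstep hflast hfne
  exact ⟨t, hmap, hsurj, hinj, hWpos, hWinj⟩

lemma core2 (m : ℕ) (hm : 3 ≤ m) (a : ℕ → ℝ)
    (ha : ∀ i j : ℕ, i < j → j < m → a i < a j) (h1 : ∀ i < m, 1 ≤ a i) :
    ∃ t : ℕ → ℕ, (∀ i < m, t i < m) ∧ (∀ k < m, ∃ i < m, t i = k) ∧
      (∀ i j, i < m → j < m → t i = t j → i = j) ∧
      (∀ k l, k ≤ m → l ≤ m →
        W m (fun i => a (t i)) k = W m (fun i => a (t i)) l → k = l) := by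
  by_cases h0 : 1 < a 0
  · have h1' : ∀ i < m, 1 < a i := by
      intro i hi
      rcases Nat.eq_zero_or_pos i with rfl | hi'
      · exact h0
      · exact h0.trans (ha 0 i hi' hi)
    obtain ⟨t, hmap, hsurj, hinj, _, hWinj⟩ := core m (by omega) a ha h1'
    exact ⟨t, hmap, hsurj, hinj, hWinj⟩
  · have ha0 : a 0 = 1 := le_antisymm (not_lt.1 h0) (h1 0 (by omega))
    obtain ⟨t', hmap', hsurj', hinj', hWpos', hWinj'⟩ :=
      core (m-1) (by omega) (fun i => a (i+1))
        (fun i j hij hj => ha (i+1) (j+1) (by omega) (by omega))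
        (by
          intro i hi
          have := ha 0 (i+1) (by omega) (by omega)
          rw [ha0] at this
          exact this)
    set t : ℕ → ℕ := fun j => if j = m-1 then 0 else t' j + 1 with ht
    set f : ℕ → ℝ := fun i => a (t i) with hf
    set f' : ℕ → ℝ := fun i => a (t' i + 1) with hf'
    have hfeq : ∀ j < m - 1, f j = f' j := by
      intro j hj
      simp only [hf, hf', ht, if_neg (by omega : ¬ j = m-1)]
    have ht2 : t (m-1) = 0 := by
      show (if m-1 = m-1 then 0 else t' (m-1) + 1) = 0
      rw [if_pos rfl]
    have hflast : f (m-1) = 1 := by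
      show a (t (m-1)) = 1
      rw [ht2, ha0]
    have hWeq : ∀ k ≤ m - 1, W m f k = W (m-1) f' k := by
      intro k hk
      rcases Nat.eq_zero_or_pos k with rfl | hk0
      · have e1 : W m f 0 = f 0 := by unfold W; rw [if_pos rfl]
        have e2 : W (m-1) f' 0 = f' 0 := by unfold W; rw [if_pos rfl]
        rw [e1, e2, hfeq 0 (by omega)]
      · rcases eq_or_lt_of_le hk with rfl | hk'
        · have e1 : W m f (m-1) = f' (m-1-1) := by
            unfold W
            rw [if_neg (by omega), if_neg (by omega), hfeq (m-1-1) (by omega), hflast, mul_one]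
          have e2 : W (m-1) f' (m-1) = f' (m-1-1) := by
            unfold W
            rw [if_neg (by omega), if_pos rfl]
          rw [e1, e2]
        · have e1 : W m f k = f' (k-1) * f' k := by
            unfold W
            rw [if_neg (by omega), if_neg (by omega), hfeq (k-1) (by omega), hfeq k (by omega)]
          have e2 : W (m-1) f' k = f' (k-1) * f' k := by
            unfold W
            rw [if_neg (by omega), if_neg (by omega)]
          rw [e1, e2]
    have hWm : W m f m = 1 := by
      unfold W
      rw [if_neg (by omega), if_pos rfl, hflast]
    refine ⟨t, ?_, ?_, ?_, ?_⟩
    · intro i hi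
      simp only [ht]
      split_ifs with h
      · omega
      · have := hmap' i (by omega); omega
    · intro k hk
      rcases Nat.eq_zero_or_pos k with rfl | hk0
      · exact ⟨m-1, by omega, ht2⟩
      · obtain ⟨i, hi, hti⟩ := hsurj' (k-1) (by omega)
        refine ⟨i, by omega, ?_⟩
        simp only [ht]
        rw [if_neg (by omega : ¬ i = m-1)]
        omega
    · intro i j hi hj hij
      rcases eq_or_ne i (m-1) with rfl | hi' <;> rcases eq_or_ne j (m-1) with rfl | hj'
      · rfl
      · simp only [ht, if_pos rfl, if_neg hj'] at hij; omega
      · simp only [ht, if_pos rfl, if_neg hi'] at hij; omega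
      · simp only [ht, if_neg hi', if_neg hj'] at hij
        exact hinj' i j (by omega) (by omega) (by omega)
    · intro k l hk hl heq
      rcases Nat.lt_or_ge k m with hkm | hkm
      · rcases Nat.lt_or_ge l m with hlm | hlm
        · rw [hWeq k (by omega), hWeq l (by omega)] at heq
          exact hWinj' k l (by omega) (by omega) heq
        · have hlm' : l = m := by omega
          rw [hlm', hWm, hWeq k (by omega)] at heq
          have := hWpos' k (by omega)
          rw [← heq] at this
          norm_num at this
      · have hkm' : k = m := by omega
        rcases Nat.lt_or_ge l m with hlm | hlm
        · rw [hkm', hWm, hWeq l (by omega)] at heq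
          have := hWpos' l (by omega)
          rw [heq] at this
          norm_num at this
        · omega
def pedge (n : ℕ) (i : Fin n) : Sym2 (Fin (n+1)) := s(Fin.castSucc i, Fin.succ i)

lemma pedge_inj (n : ℕ) : Function.Injective (pedge n) := by
  intro i j hij
  unfold pedge at hij
  rw [Sym2.eq_iff] at hij
  have hi := i.isLt
  have hj := j.isLt
  rcases hij with ⟨h1, _⟩ | ⟨h1, h2⟩
  · exact Fin.castSucc_injective _ h1
  · have e1 := congrArg Fin.val h1
    have e2 := congrArg Fin.val h2
    simp only [Fin.coe_castSucc, Fin.val_succ] at e1 e2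
    apply Fin.ext
    omega

lemma path_edgeFS (n : ℕ) :
    edgeFS (SimpleGraph.pathGraph (n+1)) = Finset.image (pedge n) Finset.univ := by
  ext e
  induction e using Sym2.ind with
  | _ u v =>
    simp only [edgeFS, Set.mem_toFinset, SimpleGraph.mem_edgeSet, SimpleGraph.pathGraph_adj,
      Finset.mem_image, Finset.mem_univ, true_and, pedge]
    have hu := u.isLt
    have hv := v.isLt
    constructor
    · rintro (huv | huv)
      · refine ⟨⟨u.1, by omega⟩, ?_⟩
        rw [Sym2.eq_iff]
        left
        constructor <;> apply Fin.ext <;> simp <;> omega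
      · refine ⟨⟨v.1, by omega⟩, ?_⟩
        rw [Sym2.eq_iff]
        right
        constructor <;> apply Fin.ext <;> simp <;> omega
    · rintro ⟨i, hi⟩
      rw [Sym2.eq_iff] at hi
      have := i.isLt
      rcases hi with ⟨h1, h2⟩ | ⟨h1, h2⟩ <;>
        [left; right] <;>
        · have e1 := congrArg Fin.val h1
          have e2 := congrArg Fin.val h2
          simp only [Fin.coe_castSucc, Fin.val_succ] at e1 e2
          omega

lemma card_path_edgeFS (n : ℕ) : (edgeFS (SimpleGraph.pathGraph (n+1))).card = n := by
  rw [path_edgeFS, Finset.card_image_of_injective _ (pedge_inj n), Finset.card_univ,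
    Fintype.card_fin]

lemma vProd_eq (n : ℕ) (hn : 1 ≤ n) (f : ℕ → ℝ) (φ : Sym2 (Fin (n+1)) → ℝ)
    (hφ : ∀ i : Fin n, φ (pedge n i) = f i.val) (v : Fin (n+1)) :
    vProd (SimpleGraph.pathGraph (n+1)) φ v = W n f v.val := by
  have hv := v.isLt
  have hmem : ∀ i : Fin n, (v ∈ pedge n i) ↔ (v.val = i.val ∨ v.val = i.val + 1) := by
    intro i
    unfold pedge
    rw [Sym2.mem_iff]
    constructor
    · rintro (rfl | rfl) <;> simp
    · rintro (h | h)
      · left; apply Fin.ext; simp [h]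
      · right; apply Fin.ext; simp [h]
  have hfilt : ∀ s : Finset (Fin n),
      ((∀ i : Fin n, (v.val = i.val ∨ v.val = i.val + 1) ↔ i ∈ s)) →
      (edgeFS (SimpleGraph.pathGraph (n+1))).filter (fun e => v ∈ e) =
        s.image (pedge n) := by
    intro s hs
    ext e
    simp only [Finset.mem_filter, path_edgeFS, Finset.mem_image, Finset.mem_univ, true_and]
    constructor
    · rintro ⟨⟨i, rfl⟩, hvi⟩
      exact ⟨i, (hs i).1 ((hmem i).1 hvi), rfl⟩
    · rintro ⟨i, hi, rfl⟩
      exact ⟨⟨i, rfl⟩, (hmem i).2 ((hs i).2 hi)⟩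
  unfold vProd
  rw [Finset.filter_congr_decidable]
  rcases Nat.eq_zero_or_pos v.val with h0 | h0
  · rw [hfilt {(⟨0, hn⟩ : Fin n)} (by intro i; simp [Fin.ext_iff]; omega),
      Finset.image_singleton, Finset.prod_singleton, hφ]
    unfold W
    rw [h0, if_pos rfl]
  · rcases Nat.lt_or_ge v.val n with h1 | h1
    · have hne : (⟨v.val - 1, by omega⟩ : Fin n) ≠ ⟨v.val, h1⟩ := by
        simp only [ne_eq, Fin.ext_iff]
        omega
      rw [hfilt {(⟨v.val - 1, by omega⟩ : Fin n), ⟨v.val, h1⟩}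
          (by intro i; simp [Fin.ext_iff]; omega),
        Finset.image_insert, Finset.image_singleton,
        Finset.prod_pair (fun hc => hne (pedge_inj n hc)), hφ, hφ]
      unfold W
      rw [if_neg (by omega), if_neg (by omega)]
    · have hvn : v.val = n := by omega
      rw [hfilt {(⟨n - 1, by omega⟩ : Fin n)} (by intro i; have := i.isLt; simp [Fin.ext_iff]; omega),
        Finset.image_singleton, Finset.prod_singleton, hφ]
      unfold W
      rw [if_neg (by omega), if_pos hvn]

end Stmt4

/-- Every path with at least three edges is universal product antimagic. -/
theorem stmt_4 (n : ℕ) (hn : 3 ≤ n) :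
    UnivProdAntimagic (SimpleGraph.pathGraph (n + 1)) := by
  intro L hL hcard
  rw [Stmt4.card_path_edgeFS n] at hcard
  set A := L.orderEmbOfFin hcard with hA
  set a : ℕ → ℝ := fun i => if h : i < n then A ⟨i, h⟩ else 0 with haDef
  have haval : ∀ (i : ℕ) (h : i < n), a i = A ⟨i, h⟩ := by
    intro i h
    simp only [haDef, dif_pos h]
  have hamem : ∀ i, i < n → a i ∈ L := by
    intro i h
    rw [haval i h]
    exact L.orderEmbOfFin_mem hcard _
  have ha : ∀ i j : ℕ, i < j → j < n → a i < a j := by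
    intro i j hij hj
    rw [haval i (hij.trans hj), haval j hj]
    exact A.strictMono (Fin.mk_lt_mk.2 hij)
  have ha1 : ∀ i < n, 1 ≤ a i := fun i hi => hL _ (hamem i hi)
  obtain ⟨t, hmap, hsurj, hinj, hWinj⟩ := Stmt4.core2 n hn a ha ha1
  set f : ℕ → ℝ := fun i => a (t i) with hfDef
  have hsymm : ∀ u v : Fin (n+1),
      (if u.val + 1 = v.val then f u.val else if v.val + 1 = u.val then f v.val else 0) =
      (if v.val + 1 = u.val then f v.val else if u.val + 1 = v.val then f u.val else 0) := by
    intro u v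
    split_ifs <;> first | rfl | omega
  set φ : Sym2 (Fin (n+1)) → ℝ := Sym2.lift
    ⟨fun u v => if u.val + 1 = v.val then f u.val else if v.val + 1 = u.val then f v.val else 0,
     fun u v => hsymm u v⟩ with hφDef
  have hφ : ∀ i : Fin n, φ (Stmt4.pedge n i) = f i.val := by
    intro i
    simp only [hφDef, Stmt4.pedge, Sym2.lift_mk]
    rw [if_pos (by simp)]
    simp
  have hteq : ∀ i j : ℕ, i < n → j < n → f i = f j → t i = t j := by
    intro i j hi hj hfij
    by_contra hc
    rcases Nat.lt_or_ge (t i) (t j) with hlt | hge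
    · exact absurd hfij (ne_of_lt (ha _ _ hlt (hmap j hj)))
    · exact absurd hfij.symm (ne_of_lt (ha _ _ (by omega) (hmap i hi)))
  refine ⟨φ, ⟨?_, ?_, ?_⟩, ?_⟩
  · intro x hx
    rw [Stmt4.path_edgeFS, Finset.coe_image] at hx
    obtain ⟨i, _, rfl⟩ := hx
    rw [Finset.mem_coe, hφ i]
    exact hamem _ (hmap i.val i.isLt)
  · intro x hx y hy hxy
    rw [Stmt4.path_edgeFS, Finset.coe_image] at hx hy
    obtain ⟨i, _, rfl⟩ := hx
    obtain ⟨j, _, rfl⟩ := hy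
    rw [hφ i, hφ j] at hxy
    have hij : i.val = j.val := hinj i.val j.val i.isLt j.isLt (hteq _ _ i.isLt j.isLt hxy)
    exact congrArg (Stmt4.pedge n) (Fin.ext hij)
  · intro y hy
    have hy' : y ∈ Set.range A := by
      rw [hA, Finset.range_orderEmbOfFin]
      exact hy
    obtain ⟨k, rfl⟩ := hy'
    obtain ⟨i, hi, hti⟩ := hsurj k.val k.isLt
    refine ⟨Stmt4.pedge n ⟨i, hi⟩, ?_, ?_⟩
    · rw [Stmt4.path_edgeFS, Finset.coe_image]
      exact Set.mem_image_of_mem _ (by simp)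
    · rw [hφ ⟨i, hi⟩]
      show a (t i) = A k
      rw [hti, haval k.val k.isLt]
  · intro u v huv
    rw [Stmt4.vProd_eq n (by omega) f φ hφ u, Stmt4.vProd_eq n (by omega) f φ hφ v] at huv
    exact Fin.ext (hWinj u.val v.val (by omega) (by omega) huv)
end

section
/- Every cycle with at least three edges is universal product antimagic. -/
/-!
Sort `L` as `a 0 < a 1 < ⋯` and give the edges `s(i, i + 1)` of the cycle the ranks
`0, 2, 4, …` going up and `…, 5, 3, 1` coming back (`zigzag`), so that the two edges at any
vertex carry distinct ranks at most two apart. If `p < q` and `p' < q'` are two such rank pairs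
with `p < p'`, then `q ≤ p + 2 ≤ p' + 1 ≤ q'`, hence `a p * a q < a p' * a q'`. So equal vertex
products force equal rank pairs, hence equal pairs of incident edges, hence equal vertices.
-/

open scoped Classical

open SimpleGraph Finset Fin.CommRing

theorem vProd_eq_prod_neighborFinset {V : Type*} [Fintype V] (G : SimpleGraph V) (φ : Sym2 V → ℝ)
    (v : V) [Fintype (G.neighborSet v)] :
    vProd G φ v = ∏ w ∈ G.neighborFinset v, φ s(v, w) := by
  have hinc : (edgeFS G).filter (fun e => v ∈ e) = (G.neighborFinset v).image (s(v, ·)) := by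
    ext e
    simp only [edgeFS, mem_filter, Set.mem_toFinset, mem_image, mem_neighborFinset]
    constructor
    · rintro ⟨he, hv⟩
      obtain ⟨w, rfl⟩ := Sym2.mem_iff_exists.1 hv
      exact ⟨w, he, rfl⟩
    · rintro ⟨w, hw, rfl⟩
      exact ⟨hw, Sym2.mem_mk_left v w⟩
  rw [vProd, hinc, prod_image fun _ _ _ _ h => Sym2.congr_right.1 h]

section Cycle
variable {n : ℕ}

theorem Fin.two_ne_zero_of_three_le : (2 : Fin (n + 3)) ≠ 0 := by
  simp [Fin.ext_iff, Nat.mod_eq_of_lt (show 2 < n + 3 by omega)]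

theorem injective_mk_add_one : Function.Injective fun i : Fin (n + 3) => s(i, i + 1) := by
  intro i j h
  rcases Sym2.eq_iff.1 h with ⟨hij, -⟩ | ⟨hij, hji⟩
  · exact hij
  · exact absurd (by linear_combination hji - hij) Fin.two_ne_zero_of_three_le

theorem edgeFS_cycleGraph :
    edgeFS (cycleGraph (n + 2)) = univ.image fun i : Fin (n + 2) => s(i, i + 1) := by
  ext e
  induction e using Sym2.ind with
  | _ u v =>
    simp only [edgeFS, Set.mem_toFinset, mem_edgeSet, cycleGraph_adj, mem_image, mem_univ, true_and,
      sub_eq_iff_eq_add']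
    constructor
    · rintro (rfl | rfl)
      · exact ⟨v, Sym2.eq_swap⟩
      · exact ⟨u, rfl⟩
    · rintro ⟨i, hi⟩
      rcases Sym2.eq_iff.1 hi with ⟨rfl, rfl⟩ | ⟨rfl, rfl⟩
      · exact Or.inr rfl
      · exact Or.inl rfl

theorem card_edgeFS_cycleGraph : (edgeFS (cycleGraph (n + 3))).card = n + 3 := by
  rw [edgeFS_cycleGraph, card_image_of_injective _ injective_mk_add_one, card_univ, Fintype.card_fin]

theorem vProd_cycleGraph (φ : Sym2 (Fin (n + 3)) → ℝ) (v : Fin (n + 3)) :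
    vProd (cycleGraph (n + 3)) φ v = φ s(v - 1, v) * φ s(v, v + 1) := by
  have hne : v - 1 ≠ v + 1 := fun h => Fin.two_ne_zero_of_three_le (by linear_combination -h)
  rw [vProd_eq_prod_neighborFinset, cycleGraph_neighborFinset, prod_pair hne, Sym2.eq_swap]

end Cycle

def zigzag {n : ℕ} (i : Fin n) : Fin n :=
  ⟨if 2 * i.val < n then 2 * i.val else 2 * (n - i.val) - 1, by split_ifs <;> omega⟩

theorem zigzag_injective {n : ℕ} : Function.Injective (zigzag : Fin n → Fin n) := by
  intro i j h
  simp only [zigzag, Fin.ext_iff] at h ⊢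
  split_ifs at h <;> omega

theorem zigzag_bijective {n : ℕ} : Function.Bijective (zigzag : Fin n → Fin n) :=
  Finite.injective_iff_bijective.1 zigzag_injective

def IsNearPair {k : ℕ} (p q : Fin k) : Prop :=
  p ≠ q ∧ q.val ≤ p.val + 2 ∧ p.val ≤ q.val + 2

theorem IsNearPair.symm {k : ℕ} {p q : Fin k} (h : IsNearPair p q) : IsNearPair q p :=
  ⟨h.1.symm, h.2.2, h.2.1⟩

theorem isNearPair_zigzag_sub_one {n : ℕ} (i : Fin (n + 2)) :
    IsNearPair (zigzag (i - 1)) (zigzag i) := by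
  refine ⟨zigzag_injective.ne fun h => one_ne_zero (sub_eq_self.1 h), ?_⟩
  have hi := i.isLt
  simp only [zigzag, Fin.coe_sub_one, Fin.ext_iff, Fin.val_zero]
  split_ifs <;> omega

section RankProducts
variable {k : ℕ} {a : Fin k → ℝ}

theorem mul_lt_mul_of_lt_of_le_add_two (ha : StrictMono a) (hpos : ∀ i, 0 < a i)
    {p q p' q' : Fin k} (hq : q.val ≤ p.val + 2) (hpq' : p' < q') (hp : p < p') :
    a p * a q < a p' * a q' :=
  mul_lt_mul (ha hp) (ha.monotone (by rw [Fin.le_iff_val_le_val]; omega)) (hpos q) (hpos p').le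

theorem sym2_eq_of_mul_eq_mul (ha : StrictMono a) (hpos : ∀ i, 0 < a i) {p q p' q' : Fin k}
    (hpq : IsNearPair p q) (hpq' : IsNearPair p' q') (h : a p * a q = a p' * a q') :
    s(p, q) = s(p', q') := by
  wlog hlt : p < q generalizing p q
  · rw [Sym2.eq_swap]
    exact this hpq.symm (by rwa [mul_comm]) (lt_of_le_of_ne (not_lt.1 hlt) hpq.1.symm)
  wlog hlt' : p' < q' generalizing p' q'
  · rw [Sym2.eq_swap (a := p')]
    exact this hpq'.symm (by rwa [mul_comm (a q')]) (lt_of_le_of_ne (not_lt.1 hlt') hpq'.1.symm)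
  rcases lt_trichotomy p p' with hp | rfl | hp
  · exact absurd h (mul_lt_mul_of_lt_of_le_add_two ha hpos hpq.2.1 hlt' hp).ne
  · rw [ha.injective (mul_left_cancel₀ (hpos p).ne' h)]
  · exact absurd h (mul_lt_mul_of_lt_of_le_add_two ha hpos hpq'.2.1 hlt hp).ne'

end RankProducts

section Labeling
variable {n : ℕ}

noncomputable def cycleLabeling (l : Fin (n + 3) → ℝ) : Sym2 (Fin (n + 3)) → ℝ :=
  Function.extend (fun i => s(i, i + 1)) (l ∘ zigzag) 0

theorem cycleLabeling_mk_add_one (l : Fin (n + 3) → ℝ) (i : Fin (n + 3)) :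
    cycleLabeling l s(i, i + 1) = l (zigzag i) :=
  injective_mk_add_one.extend_apply _ _ i

theorem bijOn_cycleLabeling {l : Fin (n + 3) → ℝ} {L : Set ℝ} (hl : Set.BijOn l Set.univ L) :
    Set.BijOn (cycleLabeling l) ↑(edgeFS (cycleGraph (n + 3))) L := by
  rw [edgeFS_cycleGraph, coe_image, coe_univ, ← Set.bijOn_comp_iff injective_mk_add_one.injOn]
  have hcomp : cycleLabeling l ∘ (fun i => s(i, i + 1)) = l ∘ zigzag :=
    funext (cycleLabeling_mk_add_one l)
  rw [hcomp]
  exact hl.comp zigzag_bijective.bijOn_univ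

theorem vProd_cycleLabeling (l : Fin (n + 3) → ℝ) (v : Fin (n + 3)) :
    vProd (cycleGraph (n + 3)) (cycleLabeling l) v = l (zigzag (v - 1)) * l (zigzag v) := by
  have hpred := cycleLabeling_mk_add_one l (v - 1)
  rw [sub_add_cancel] at hpred
  rw [vProd_cycleGraph, hpred, cycleLabeling_mk_add_one]

theorem injective_vProd_cycleLabeling {l : Fin (n + 3) → ℝ} (hl : StrictMono l)
    (hpos : ∀ i, 0 < l i) : Function.Injective (vProd (cycleGraph (n + 3)) (cycleLabeling l)) := by
  intro v w h
  rw [vProd_cycleLabeling, vProd_cycleLabeling] at h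
  have hranks := sym2_eq_of_mul_eq_mul hl hpos (isNearPair_zigzag_sub_one v)
    (isNearPair_zigzag_sub_one w) h
  have hedge : s(v - 1, v) = s(w - 1, w) := by
    apply Sym2.map.injective zigzag_injective
    simpa only [Sym2.map_mk] using hranks
  exact sub_left_inj.1 <| injective_mk_add_one (a₁ := v - 1) (a₂ := w - 1) <| by
    simpa only [sub_add_cancel] using hedge

end Labeling

/-- Every cycle with at least three edges is universal product antimagic. -/
theorem stmt_5 (n : ℕ) (hn : 3 ≤ n) :
    UnivProdAntimagic (SimpleGraph.cycleGraph n) := by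
  obtain ⟨m, rfl⟩ := Nat.exists_eq_add_of_le' hn
  intro L hL hcard
  rw [card_edgeFS_cycleGraph] at hcard
  set l := L.orderEmbOfFin hcard
  have hl : Set.BijOn l Set.univ L := by
    rw [← L.range_orderEmbOfFin hcard, ← Set.image_univ]
    exact l.injective.injOn.bijOn_image
  have hpos (i : Fin (m + 3)) : 0 < l i := zero_lt_one.trans_le (hL _ (L.orderEmbOfFin_mem hcard i))
  exact ⟨cycleLabeling l, bijOn_cycleLabeling hl, injective_vProd_cycleLabeling l.strictMono hpos⟩
end

section
/- Let H be a spanning subgraph of a graph G. If H is weighted universal product antimagic, then G is weighted universal product antimagic. -/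
open scoped Classical

/-- Weighted universal product antimagic. -/
def WeightedUnivProdAntimagic {V : Type*} [Fintype V] (G : SimpleGraph V) : Prop :=
  ∀ w : V → ℝ, (∀ v, 1 ≤ w v) →
    ∀ L : Finset ℝ, (∀ x ∈ L, 1 ≤ x) → L.card = (edgeFS G).card →
      ∃ φ : Sym2 V → ℝ, Set.BijOn φ ↑(edgeFS G) ↑L ∧
        Function.Injective (fun v => w v * vProd G φ v)

/-! The labels of `L` not used on `H` are put on the edges of `G` outside `H` in an arbitrary
way; their product at each vertex is then absorbed into the weight of that vertex, which stays
`≥ 1` because all labels are `≥ 1`. An antimagic labeling of `H` for these modified weights,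
extended by the arbitrary labels, is antimagic for `G` and the original weights. -/

theorem Set.BijOn.piecewise_union {α β : Type*} {s₁ s₂ : Set α} {t₁ t₂ : Set β} {f g : α → β}
    [DecidablePred (· ∈ s₁)] (hf : BijOn f s₁ t₁) (hg : BijOn g s₂ t₂)
    (hs : Disjoint s₁ s₂) (ht : Disjoint t₁ t₂) :
    BijOn (s₁.piecewise f g) (s₁ ∪ s₂) (t₁ ∪ t₂) := by
  have hf' : BijOn (s₁.piecewise f g) s₁ t₁ := hf.congr (piecewise_eqOn s₁ f g).symm
  have hg' : BijOn (s₁.piecewise f g) s₂ t₂ :=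
    hg.congr fun x hx => (piecewise_eqOn_compl s₁ f g (hs.notMem_of_mem_right hx)).symm
  refine hf'.union hg' ((injOn_union hs).2 ⟨hf'.injOn, hg'.injOn, ?_⟩)
  intro x hx y hy hxy
  exact ht.ne_of_mem (hf'.mapsTo hx) (hg'.mapsTo hy) hxy

theorem Finset.exists_bijOn_of_card_eq {α β : Type*} [Nonempty β] {s : Finset α} {t : Finset β}
    (h : s.card = t.card) : ∃ f : α → β, Set.BijOn f s t :=
  s.finite_toSet.exists_bijOn_of_encard_eq (by simp [h])

section

variable {V : Type*} [Fintype V] {H G : SimpleGraph V}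

theorem edgeFS_mono (hHG : H ≤ G) : edgeFS H ⊆ edgeFS G :=
  Set.toFinset_subset_toFinset.2 (SimpleGraph.edgeSet_mono hHG)

theorem vProd_piecewise (hHG : H ≤ G) (φ ψ : Sym2 V → ℝ) (v : V) :
    vProd G ((edgeFS H : Set (Sym2 V)).piecewise φ ψ) v =
      vProd H φ v * ∏ e ∈ (edgeFS G \ edgeFS H).filter (v ∈ ·), ψ e := by
  have hsplit : (edgeFS G).filter (v ∈ ·) =
      (edgeFS H).filter (v ∈ ·) ∪ (edgeFS G \ edgeFS H).filter (v ∈ ·) := by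
    rw [← Finset.filter_union, Finset.union_sdiff_of_subset (edgeFS_mono hHG)]
  have hdisj : Disjoint ((edgeFS H).filter (v ∈ ·)) ((edgeFS G \ edgeFS H).filter (v ∈ ·)) :=
    Finset.disjoint_sdiff.mono (Finset.filter_subset _ _) (Finset.filter_subset _ _)
  rw [vProd, hsplit, Finset.prod_union hdisj, vProd]
  congr 1
  · refine Finset.prod_congr rfl fun e he => ?_
    exact Set.piecewise_eq_of_mem _ _ _ (Finset.mem_of_mem_filter e he)
  · refine Finset.prod_congr rfl fun e he => ?_
    exact Set.piecewise_eq_of_notMem _ _ _ (Finset.mem_sdiff.1 (Finset.mem_of_mem_filter e he)).2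

end

/-- If a spanning subgraph `H` of `G` is weighted universal product
antimagic, then so is `G`. -/
theorem stmt_6 {V : Type*} [Fintype V] (H G : SimpleGraph V) (hHG : H ≤ G)
    (hH : WeightedUnivProdAntimagic H) :
    WeightedUnivProdAntimagic G := by
  intro w hw L hL hcard
  have hsub := edgeFS_mono hHG
  obtain ⟨LH, hLH, hLHcard⟩ := Finset.exists_subset_card_eq (s := L) (n := (edgeFS H).card)
    (hcard ▸ Finset.card_le_card hsub)
  obtain ⟨ψ, hψ⟩ := Finset.exists_bijOn_of_card_eq (s := edgeFS G \ edgeFS H) (t := L \ LH)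
    (by rw [Finset.card_sdiff_of_subset hsub, Finset.card_sdiff_of_subset hLH, hcard, hLHcard])
  set w' : V → ℝ := fun v => w v * ∏ e ∈ (edgeFS G \ edgeFS H).filter (v ∈ ·), ψ e
  have hw' : ∀ v, 1 ≤ w' v := fun v => one_le_mul_of_one_le_of_one_le (hw v) <|
    Finset.one_le_prod fun e he =>
      hL _ (Finset.mem_sdiff.1 (hψ.mapsTo (Finset.mem_of_mem_filter e he))).1
  obtain ⟨φ, hφ, hinj⟩ := hH w' hw' LH (fun x hx => hL x (hLH hx)) hLHcard
  refine ⟨(edgeFS H : Set (Sym2 V)).piecewise φ ψ, ?_, ?_⟩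
  · have := hφ.piecewise_union hψ (Finset.disjoint_coe.2 Finset.disjoint_sdiff)
      (Finset.disjoint_coe.2 Finset.disjoint_sdiff)
    rwa [← Finset.coe_union, ← Finset.coe_union, Finset.union_sdiff_of_subset hsub,
      Finset.union_sdiff_of_subset hLH] at this
  · convert hinj using 2 with v
    rw [vProd_piecewise hHG, ← mul_assoc, mul_right_comm]
end

section
/- If G is a weighted universal antimagic graph, then every leafy graph of G is universal antimagic. -/
open scoped Classical

/-- Weighted universal antimagic. -/
def WeightedUnivAntimagic {V : Type*} [Fintype V] (G : SimpleGraph V) : Prop :=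
  ∀ w : V → ℝ, (∀ v, 0 < w v) →
    ∀ L : Finset ℝ, (∀ x ∈ L, 0 < x) → L.card = (edgeFS G).card →
      ∃ φ : Sym2 V → ℝ, Set.BijOn φ ↑(edgeFS G) ↑L ∧
        Function.Injective (fun v => w v + vSum G φ v)

/-- `G` has an antimagic `L`-labeling for every set `L` of `(edgeFS G).card` positive reals. -/
def UnivAntimagic {V : Type*} [Fintype V] (G : SimpleGraph V) : Prop :=
  ∀ L : Finset ℝ, (∀ x ∈ L, 0 < x) → L.card = (edgeFS G).card →
    ∃ φ : Sym2 V → ℝ, Set.BijOn φ ↑(edgeFS G) ↑L ∧ Function.Injective (vSum G φ)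

/-- `G'` is a leafy graph of `G`: `G'` is obtained from `G` by attaching a non-negative
number of new pendant edges (new leaves) to each interior vertex (degree at least two)
of `G`. -/
def IsLeafyGraphOf {V V' : Type*} [Fintype V] [Fintype V'] (G' : SimpleGraph V')
    (G : SimpleGraph V) : Prop :=
  ∃ f : V ↪ V',
    (∀ u v : V, G'.Adj (f u) (f v) ↔ G.Adj u v) ∧
    (∀ x : V', x ∉ Set.range f →
      G'.degree x = 1 ∧ ∃ v : V, G'.Adj x (f v) ∧ 2 ≤ G.degree v)

-- Auxiliary lemmas
-- aux: top subset
lemma top_subset (n : ℕ) : ∀ L : Finset ℝ, n ≤ L.card →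
    ∃ L1 ⊆ L, L1.card = n ∧ ∀ a ∈ L1, ∀ b ∈ L, b ∉ L1 → b < a := by
  induction n with
  | zero => intro L _; exact ⟨∅, Finset.empty_subset _, rfl, by simp⟩
  | succ n ih =>
    intro L hn
    have hne : L.Nonempty := Finset.card_pos.mp (by omega)
    set M := L.max' hne with hM
    have hMmem : M ∈ L := L.max'_mem hne
    have hcard : n ≤ (L.erase M).card := by
      rw [Finset.card_erase_of_mem hMmem]; omega
    obtain ⟨L1', hsub', hcard', hdom'⟩ := ih (L.erase M) hcard
    have hMnot : M ∉ L1' := fun h => (Finset.mem_erase.mp (hsub' h)).1 rfl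
    refine ⟨insert M L1', ?_, ?_, ?_⟩
    · intro a ha
      rcases Finset.mem_insert.mp ha with rfl | ha
      · exact hMmem
      · exact Finset.mem_of_mem_erase (hsub' ha)
    · rw [Finset.card_insert_of_notMem hMnot, hcard']
    · intro a ha b hb hbnot
      have hbM : b ≠ M := fun h => hbnot (h ▸ Finset.mem_insert_self _ _)
      rcases Finset.mem_insert.mp ha with rfl | ha
      · exact lt_of_le_of_ne (L.le_max' b hb) hbM
      · exact hdom' a ha b (Finset.mem_erase.mpr ⟨hbM, hb⟩)
          (fun h => hbnot (Finset.mem_insert_of_mem h))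

-- incidence card
lemma incid_card {V : Type*} [Fintype V] (G : SimpleGraph V) (v : V) :
    ((edgeFS G).filter (fun e => v ∈ e)).card = G.degree v := by
  classical
  have h1 : edgeFS G = G.edgeFinset := by
    ext e; simp [edgeFS, Set.mem_toFinset, SimpleGraph.mem_edgeFinset]
  rw [h1]
  rw [← SimpleGraph.incidenceFinset_eq_filter]
  exact SimpleGraph.card_incidenceFinset_eq_degree G v

lemma mem_edgeFS {V : Type*} [Fintype V] {G : SimpleGraph V} {e : Sym2 V} :
    e ∈ edgeFS G ↔ e ∈ G.edgeSet := Set.mem_toFinset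

/-- If `G` is weighted universal antimagic, then every leafy graph of `G`
is universal antimagic. -/
theorem stmt_7 {V V' : Type*} [Fintype V] [Fintype V'] (G : SimpleGraph V)
    (G' : SimpleGraph V') (hG : WeightedUnivAntimagic G) (hleafy : IsLeafyGraphOf G' G) :
    UnivAntimagic G' := by
  obtain ⟨f, hiff, hpend⟩ := hleafy
  intro L hLpos hLcard
  -- pendant vertices
  set X := {x : V' // x ∉ Set.range f} with hX
  have hpend' : ∀ x : X,
      G'.degree x.1 = 1 ∧ ∃ v : V, G'.Adj x.1 (f v) ∧ 2 ≤ G.degree v :=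
    fun x => hpend x.1 x.2
  choose hdeg1 nb hnbadj hnbdeg using hpend'
  set pe : X → Sym2 V' := fun x => s(x.1, f (nb x)) with hpe
  have hpemem : ∀ x : X, pe x ∈ edgeFS G' := fun x =>
    mem_edgeFS.mpr ((SimpleGraph.mem_edgeSet G').mpr (hnbadj x))
  have hmapinj : Function.Injective (Sym2.map (f : V → V')) := Sym2.map.injective f.injective
  set A := (edgeFS G).image (Sym2.map f) with hA
  have hAsub : A ⊆ edgeFS G' := by
    intro e he
    obtain ⟨e₀, he₀, rfl⟩ := Finset.mem_image.mp he
    induction e₀ using Sym2.ind with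
    | _ u v =>
      rw [mem_edgeFS] at he₀ ⊢
      rw [Sym2.map_pair_eq, SimpleGraph.mem_edgeSet]
      rw [SimpleGraph.mem_edgeSet] at he₀
      exact (hiff u v).mpr he₀
  set B := edgeFS G' \ A with hB
  have hunion : edgeFS G' = A ∪ B := (Finset.union_sdiff_of_subset hAsub).symm
  have hdisj : Disjoint A B := Finset.disjoint_sdiff
  -- unique incident edge at a pendant vertex
  have hfilterx : ∀ x : X, (edgeFS G').filter (fun e => x.1 ∈ e) = {pe x} := by
    intro x
    have hcard : ((edgeFS G').filter (fun e => x.1 ∈ e)).card = 1 := by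
      rw [incid_card]; exact hdeg1 x
    obtain ⟨a, ha⟩ := Finset.card_eq_one.mp hcard
    have hmem : pe x ∈ (edgeFS G').filter (fun e => x.1 ∈ e) :=
      Finset.mem_filter.mpr ⟨hpemem x, Sym2.mem_mk_left _ _⟩
    rw [ha] at hmem ⊢
    rw [Finset.mem_singleton.mp hmem]
  have hpeB : ∀ x : X, pe x ∈ B := by
    intro x
    rw [hB, Finset.mem_sdiff]
    refine ⟨hpemem x, fun hmem => ?_⟩
    obtain ⟨e₀, _, he⟩ := Finset.mem_image.mp hmem
    have hx : x.1 ∈ Sym2.map f e₀ := by rw [he]; exact Sym2.mem_mk_left _ _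
    obtain ⟨a, _, ha⟩ := Sym2.mem_map.mp hx
    exact x.2 ⟨a, ha⟩
  have hpeinj : Function.Injective pe := by
    intro x y hxy
    have hx : x.1 ∈ pe y := by rw [← hxy]; exact Sym2.mem_mk_left _ _
    rcases Sym2.mem_iff.mp hx with h | h
    · exact Subtype.ext h
    · exact absurd ⟨nb y, h.symm⟩ x.2
  have hBeq : B = Finset.univ.image (fun x : X => pe x) := by
    apply Finset.Subset.antisymm
    · intro e he
      rw [hB, Finset.mem_sdiff] at he
      obtain ⟨heG', henA⟩ := he
      induction e using Sym2.ind with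
      | _ a b =>
        have hadj : G'.Adj a b := (SimpleGraph.mem_edgeSet G').mp (mem_edgeFS.mp heG')
        by_cases hra : a ∈ Set.range f
        · by_cases hrb : b ∈ Set.range f
          · obtain ⟨u, rfl⟩ := hra; obtain ⟨v, rfl⟩ := hrb
            exact absurd (Finset.mem_image.mpr ⟨s(u,v),
              mem_edgeFS.mpr ((SimpleGraph.mem_edgeSet G).mpr ((hiff u v).mp hadj)),
              Sym2.map_pair_eq f u v⟩) henA
          · have hmem : s(a,b) ∈ (edgeFS G').filter (fun e => (⟨b, hrb⟩ : X).1 ∈ e) :=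
              Finset.mem_filter.mpr ⟨heG', Sym2.mem_mk_right _ _⟩
            rw [hfilterx ⟨b, hrb⟩] at hmem
            rw [Finset.mem_singleton.mp hmem]
            exact Finset.mem_image.mpr ⟨⟨b, hrb⟩, Finset.mem_univ _, rfl⟩
        · have hmem : s(a,b) ∈ (edgeFS G').filter (fun e => (⟨a, hra⟩ : X).1 ∈ e) :=
            Finset.mem_filter.mpr ⟨heG', Sym2.mem_mk_left _ _⟩
          rw [hfilterx ⟨a, hra⟩] at hmem
          rw [Finset.mem_singleton.mp hmem]
          exact Finset.mem_image.mpr ⟨⟨a, hra⟩, Finset.mem_univ _, rfl⟩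
    · intro e he
      obtain ⟨x, _, rfl⟩ := Finset.mem_image.mp he
      exact hpeB x
  -- cardinalities
  have hcardA : A.card = (edgeFS G).card := Finset.card_image_of_injective _ hmapinj
  have hcardD : L.card = A.card + B.card := by
    rw [hLcard, hunion, Finset.card_union_of_disjoint hdisj]
  -- split the labels
  obtain ⟨L1, hL1sub, hL1card, hdom⟩ := top_subset (edgeFS G).card L (by omega)
  set L2 := L \ L1 with hL2
  have hLsplit : L = L1 ∪ L2 := (Finset.union_sdiff_of_subset hL1sub).symm
  have hLdisj : Disjoint L1 L2 := Finset.disjoint_sdiff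
  have hL2pos : ∀ x ∈ L2, 0 < x := fun x hx => hLpos x (Finset.mem_sdiff.mp hx).1
  have hcardBL2 : B.card = L2.card := by
    rw [hL2, Finset.card_sdiff_of_subset hL1sub, hL1card]; omega
  set χ := Finset.equivOfCardEq hcardBL2 with hχ
  set ψ : Sym2 V' → ℝ := fun e => if h : e ∈ B then (χ ⟨e, h⟩ : ℝ) else 0 with hψ
  have hψval : ∀ (e) (he : e ∈ B), ψ e = (χ ⟨e, he⟩ : ℝ) := fun e he => dif_pos he
  have hψmem : ∀ e ∈ B, ψ e ∈ L2 := fun e he => by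
    rw [hψval e he]; exact (χ ⟨e, he⟩).2
  -- the weights
  set pend : V → ℝ := fun v => ∑ e ∈ B.filter (fun e => f v ∈ e), ψ e with hpenddef
  have hpendnn : ∀ v, 0 ≤ pend v := fun v => Finset.sum_nonneg fun e he =>
    le_of_lt (hL2pos _ (hψmem e (Finset.mem_filter.mp he).1))
  obtain ⟨φ, hφbij, hφinj⟩ := hG (fun v => 1 + pend v)
    (fun v => by have := hpendnn v; show (0:ℝ) < 1 + pend v; linarith)
    L1 (fun x hx => hLpos x (hL1sub hx)) hL1card
  -- the labeling of G'
  set φ' : Sym2 V' → ℝ := fun e =>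
    if heB : e ∈ B then ψ e
    else if h : ∃ e₀, e₀ ∈ edgeFS G ∧ Sym2.map f e₀ = e then φ h.choose else 0 with hφ'def
  have hφ'B : ∀ e ∈ B, φ' e = ψ e := fun e he => dif_pos he
  have hφ'A : ∀ e₀ ∈ edgeFS G, φ' (Sym2.map f e₀) = φ e₀ := by
    intro e₀ he₀
    have hnB : Sym2.map f e₀ ∉ B := fun h => (Finset.mem_sdiff.mp h).2
      (Finset.mem_image.mpr ⟨e₀, he₀, rfl⟩)
    have hexi : ∃ e₁, e₁ ∈ edgeFS G ∧ Sym2.map f e₁ = Sym2.map f e₀ := ⟨e₀, he₀, rfl⟩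
    have h1 : φ' (Sym2.map f e₀) = φ hexi.choose := by
      rw [hφ'def]
      simp only []
      rw [dif_neg hnB, dif_pos hexi]
    rw [h1, hmapinj hexi.choose_spec.2]
  -- vertex sums
  have hsum_fv : ∀ v : V, vSum G' φ' (f v) = vSum G φ v + pend v := by
    intro v
    have hdf : Disjoint (A.filter (fun e => f v ∈ e)) (B.filter (fun e => f v ∈ e)) :=
      Finset.disjoint_filter_filter hdisj
    simp only [vSum]
    rw [hunion, Finset.filter_union, Finset.sum_union hdf]
    congr 1
    · have himg : A.filter (fun e => f v ∈ e) =
          ((edgeFS G).filter (fun e => v ∈ e)).image (Sym2.map f) := by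
        ext e
        simp only [Finset.mem_filter, Finset.mem_image, hA]
        constructor
        · rintro ⟨⟨e₀, he₀, rfl⟩, hmem⟩
          refine ⟨e₀, ⟨he₀, ?_⟩, rfl⟩
          obtain ⟨a, ha, haeq⟩ := Sym2.mem_map.mp hmem
          rwa [← f.injective haeq]
        · rintro ⟨e₀, ⟨he₀, hv⟩, rfl⟩
          exact ⟨⟨e₀, he₀, rfl⟩, Sym2.mem_map.mpr ⟨v, hv, rfl⟩⟩
      rw [himg, Finset.sum_image (fun x _ y _ h => hmapinj h)]
      exact Finset.sum_congr rfl (fun e₀ he₀ => hφ'A e₀ (Finset.mem_filter.mp he₀).1)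
    · exact Finset.sum_congr rfl (fun e he => hφ'B e (Finset.mem_filter.mp he).1)
  have hsum_x : ∀ x : X, vSum G' φ' x.1 = ψ (pe x) := by
    intro x
    simp only [vSum]
    rw [hfilterx x, Finset.sum_singleton]
    exact hφ'B _ (hpeB x)
  have hdeg0 : ∀ v : V, G.degree v = 0 → vSum G φ v = 0 := by
    intro v hv
    have he : ((edgeFS G).filter (fun e => v ∈ e)) = ∅ :=
      Finset.card_eq_zero.mp (by rw [incid_card]; exact hv)
    simp [vSum, he]
  have hpend0 : ∀ v : V, G.degree v < 2 → pend v = 0 := by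
    intro v hv
    have he : B.filter (fun e => f v ∈ e) = ∅ := by
      rw [Finset.filter_eq_empty_iff]
      intro e he
      rw [hBeq] at he
      obtain ⟨x, _, rfl⟩ := Finset.mem_image.mp he
      intro hmem
      rcases Sym2.mem_iff.mp hmem with h | h
      · exact x.2 ⟨v, h⟩
      · have h2 := hnbdeg x; rw [← f.injective h] at h2; omega
    show (∑ e ∈ B.filter (fun e => f v ∈ e), ψ e) = 0
    rw [he, Finset.sum_empty]
  have hmemL1 : ∀ v : V, ∀ e' ∈ (edgeFS G).filter (fun e => v ∈ e), φ e' ∈ L1 :=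
    fun v e' he' => hφbij.mapsTo (Finset.mem_coe.mpr (Finset.mem_filter.mp he').1)
  have hbig : ∀ v : V, 1 ≤ G.degree v → ∀ c ∈ L2, c < vSum G φ v := by
    intro v hv c hc
    have hne : ((edgeFS G).filter (fun e => v ∈ e)).Nonempty := by
      rw [← Finset.card_pos, incid_card]; omega
    obtain ⟨e, he⟩ := hne
    have h1 : c < φ e := hdom (φ e) (hmemL1 v e he) c
      (Finset.mem_sdiff.mp hc).1 (Finset.mem_sdiff.mp hc).2
    have h2 : (0:ℝ) ≤ ∑ e' ∈ ((edgeFS G).filter (fun e => v ∈ e)).erase e, φ e' :=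
      Finset.sum_nonneg fun e' he' =>
        le_of_lt (hLpos _ (hL1sub (hmemL1 v e' (Finset.mem_of_mem_erase he'))))
    have h3 : φ e + ∑ e' ∈ ((edgeFS G).filter (fun e => v ∈ e)).erase e, φ e'
        = vSum G φ v := Finset.add_sum_erase _ _ he
    show c < vSum G φ v
    linarith
  -- bijectivity
  have hbijA : Set.BijOn φ' ↑A ↑L1 := by
    refine ⟨?_, ?_, ?_⟩
    · intro e he
      obtain ⟨e₀, he₀, rfl⟩ := Finset.mem_image.mp (Finset.mem_coe.mp he)
      rw [hφ'A e₀ he₀]; exact hφbij.mapsTo (Finset.mem_coe.mpr he₀)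
    · intro e he e' he' heq
      obtain ⟨e₀, he₀, rfl⟩ := Finset.mem_image.mp (Finset.mem_coe.mp he)
      obtain ⟨e₀', he₀', rfl⟩ := Finset.mem_image.mp (Finset.mem_coe.mp he')
      rw [hφ'A e₀ he₀, hφ'A e₀' he₀'] at heq
      rw [hφbij.injOn (Finset.mem_coe.mpr he₀) (Finset.mem_coe.mpr he₀') heq]
    · intro l hl
      obtain ⟨e₀, he₀, hval⟩ := hφbij.surjOn hl
      exact ⟨Sym2.map f e₀,
        Finset.mem_coe.mpr (Finset.mem_image.mpr ⟨e₀, Finset.mem_coe.mp he₀, rfl⟩),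
        by rw [hφ'A e₀ (Finset.mem_coe.mp he₀)]; exact hval⟩
  have hbijB : Set.BijOn φ' ↑B ↑L2 := by
    refine ⟨?_, ?_, ?_⟩
    · intro e he
      rw [hφ'B e (Finset.mem_coe.mp he)]
      exact Finset.mem_coe.mpr (hψmem e (Finset.mem_coe.mp he))
    · intro e he e' he' heq
      have heB := Finset.mem_coe.mp he
      have heB' := Finset.mem_coe.mp he'
      rw [hφ'B e heB, hφ'B e' heB', hψval e heB, hψval e' heB'] at heq
      have := χ.injective (Subtype.coe_injective heq)
      exact congrArg Subtype.val this
    · intro l hl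
      have hlL2 := Finset.mem_coe.mp hl
      refine ⟨(χ.symm ⟨l, hlL2⟩).1, Finset.mem_coe.mpr (χ.symm ⟨l, hlL2⟩).2, ?_⟩
      rw [hφ'B _ (χ.symm ⟨l, hlL2⟩).2, hψval _ (χ.symm ⟨l, hlL2⟩).2]
      have : (⟨(χ.symm ⟨l, hlL2⟩).1, (χ.symm ⟨l, hlL2⟩).2⟩ : {x // x ∈ B}) = χ.symm ⟨l, hlL2⟩ := rfl
      rw [this, Equiv.apply_symm_apply]
  have hinjU : Set.InjOn φ' (↑A ∪ ↑B) := by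
    intro e he e' he' heq
    rcases he with he | he <;> rcases he' with he' | he'
    · exact hbijA.injOn he he' heq
    · exfalso
      have h1 := hbijA.mapsTo he
      have h2 := hbijB.mapsTo he'
      rw [heq] at h1
      exact Finset.disjoint_left.mp hLdisj (Finset.mem_coe.mp h1) (Finset.mem_coe.mp h2)
    · exfalso
      have h1 := hbijA.mapsTo he'
      have h2 := hbijB.mapsTo he
      rw [← heq] at h1
      exact Finset.disjoint_left.mp hLdisj (Finset.mem_coe.mp h1) (Finset.mem_coe.mp h2)
    · exact hbijB.injOn he he' heq
  have hbij : Set.BijOn φ' ↑(edgeFS G') ↑L := by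
    rw [hunion, hLsplit, Finset.coe_union, Finset.coe_union]
    exact hbijA.union hbijB hinjU
  refine ⟨φ', hbij, ?_⟩
  -- injectivity of vertex sums
  have hcross : ∀ (v : V) (x : X), vSum G' φ' (f v) ≠ vSum G' φ' x.1 := by
    intro v x
    rw [hsum_fv v, hsum_x x]
    have hc : ψ (pe x) ∈ L2 := hψmem _ (hpeB x)
    rcases Nat.lt_or_ge (G.degree v) 1 with hd | hd
    · have h0 : vSum G φ v = 0 := hdeg0 v (by omega)
      have h1 : pend v = 0 := hpend0 v (by omega)
      have := hL2pos _ hc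
      rw [h0, h1]
      intro hcon; linarith
    · have h1 := hbig v hd _ hc
      have h2 := hpendnn v
      intro hcon; linarith
  intro y1 y2 heq
  by_cases h1 : y1 ∈ Set.range f <;> by_cases h2 : y2 ∈ Set.range f
  · obtain ⟨v1, rfl⟩ := h1; obtain ⟨v2, rfl⟩ := h2
    rw [hsum_fv v1, hsum_fv v2] at heq
    have : v1 = v2 := hφinj (by show (1 + pend v1) + vSum G φ v1 = (1 + pend v2) + vSum G φ v2; linarith)
    rw [this]
  · obtain ⟨v1, rfl⟩ := h1
    exact absurd heq (hcross v1 ⟨y2, h2⟩)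
  · obtain ⟨v2, rfl⟩ := h2
    exact absurd heq.symm (hcross v2 ⟨y1, h1⟩)
  · have hx1 := hsum_x ⟨y1, h1⟩
    have hx2 := hsum_x ⟨y2, h2⟩
    rw [hx1, hx2, hψval _ (hpeB ⟨y1, h1⟩), hψval _ (hpeB ⟨y2, h2⟩)] at heq
    have := hpeinj (congrArg Subtype.val (χ.injective (Subtype.coe_injective heq)))
    exact congrArg Subtype.val this
end

section
/- Let G be a connected simple graph with m edges, m ≥ 3. If every interior vertex of G is a support vertex, then G is universal antimagic. -/
open scoped Classical

/-!
Give the smallest labels to the pendant edges (edges at a leaf). A leaf's vertex sum is the label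
of its pendant edge, so leaves get distinct sums: two leaves on one edge would make `G` a single
edge. An interior vertex sum exceeds every pendant label, since the vertex either meets a
non-pendant edge, whose label is larger, or is the centre of a star containing every edge.
Finally every interior vertex `v` has a pendant edge `d v` of its own; permuting the labels of
these edges greedily (the largest label to the vertex whose remaining sum is largest) makes the
interior sums pairwise distinct.
-/

open Finset

namespace Set

theorem BijOn.piecewise_union_s11 {α β : Type*} {f g : α → β} {s₁ s₂ : Set α} {t₁ t₂ : Set β}
    [∀ x, Decidable (x ∈ s₁)] (hf : BijOn f s₁ t₁) (hg : BijOn g s₂ t₂) (hs : Disjoint s₁ s₂)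
    (ht : Disjoint t₁ t₂) : BijOn (s₁.piecewise f g) (s₁ ∪ s₂) (t₁ ∪ t₂) := by
  have hf' : BijOn (s₁.piecewise f g) s₁ t₁ := hf.congr (piecewise_eqOn s₁ f g).symm
  have hg' : BijOn (s₁.piecewise f g) s₂ t₂ :=
    hg.congr ((piecewise_eqOn_compl s₁ f g).mono hs.subset_compl_left).symm
  refine hf'.union hg' ((injOn_union hs).mpr ⟨hf'.injOn, hg'.injOn, ?_⟩)
  exact fun x hx y hy => ht.ne_of_mem (hf'.mapsTo hx) (hg'.mapsTo hy)

theorem BijOn.piecewise_of_subset {α β : Type*} {f g : α → β} {s D : Set α} {t : Set β}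
    [∀ x, Decidable (x ∈ D)] (hf : BijOn f s t) (hD : D ⊆ s) (hg : BijOn g D (f '' D)) :
    BijOn (D.piecewise g f) s t := by
  have hrest : BijOn f (s \ D) (t \ f '' D) := by
    have := (hf.injOn.mono sdiff_subset).bijOn_image (s := s \ D)
    rwa [hf.injOn.image_sdiff, inter_eq_right.mpr hD, hf.image_eq] at this
  have := hg.piecewise_union_s11 hrest disjoint_sdiff_right disjoint_sdiff_right
  rwa [union_sdiff_cancel hD, union_sdiff_cancel (hf.image_eq ▸ image_mono hD)] at this

end Set

namespace Finset

theorem exists_subset_card_eq_forall_lt {β : Type*} [LinearOrder β] (L : Finset β) :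
    ∀ p ≤ #L, ∃ s ⊆ L, #s = p ∧ ∀ x ∈ s, ∀ y ∈ L \ s, x < y := by
  intro p
  induction p with
  | zero => exact fun _ => ⟨∅, empty_subset _, rfl, by simp⟩
  | succ p ih =>
    intro hp
    obtain ⟨s, hsL, hs, hlt⟩ := ih (by omega)
    have hne : (L \ s).Nonempty := by
      rw [← card_pos, card_sdiff_of_subset hsL]; omega
    obtain ⟨hcL, hcs⟩ := mem_sdiff.mp ((L \ s).min'_mem hne)
    refine ⟨insert ((L \ s).min' hne) s, insert_subset hcL hsL,
      by rw [card_insert_of_notMem hcs, hs], ?_⟩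
    intro x hx y hy
    rw [sdiff_insert, mem_erase] at hy
    rcases mem_insert.mp hx with rfl | hx
    · exact lt_of_le_of_ne ((L \ s).min'_le y hy.2) (Ne.symm hy.1)
    · exact hlt x hx y hy.2

theorem exists_bijOn_of_card_eq_s11 {α β : Type*} [Nonempty β] {s : Finset α} {t : Finset β}
    (h : #s = #t) : ∃ f : α → β, Set.BijOn f s t :=
  s.finite_toSet.exists_bijOn_of_encard_eq (by simp [h])

theorem exists_bijOn_forall_lt {α β : Type*} [DecidableEq α] [LinearOrder β] [Nonempty β]
    {A E : Finset α} (hA : A ⊆ E) {L : Finset β} (hL : #L = #E) :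
    ∃ φ : α → β, Set.BijOn φ E L ∧ ∀ a ∈ A, ∀ b ∈ E \ A, φ a < φ b := by
  obtain ⟨s, hsL, hs, hlt⟩ := L.exists_subset_card_eq_forall_lt #A (hL ▸ card_le_card hA)
  obtain ⟨ψ, hψ⟩ := exists_bijOn_of_card_eq_s11 hs.symm
  obtain ⟨χ, hχ⟩ := exists_bijOn_of_card_eq_s11 (s := E \ A) (t := L \ s)
    (by rw [card_sdiff_of_subset hA, card_sdiff_of_subset hsL, hs, hL])
  have hφ := hψ.piecewise_union_s11 hχ (disjoint_coe.mpr disjoint_sdiff)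
    (disjoint_coe.mpr disjoint_sdiff)
  rw [← coe_union, ← coe_union, union_sdiff_of_subset hA, union_sdiff_of_subset hsL] at hφ
  refine ⟨_, hφ, fun a ha b hb => ?_⟩
  rw [Set.piecewise_eq_of_mem _ _ _ (mem_coe.mpr ha),
    Set.piecewise_eq_of_notMem _ _ _ (mem_sdiff.mp hb).2]
  exact hlt _ (hψ.mapsTo ha) _ (hχ.mapsTo hb)

theorem exists_bijOn_injOn_add {ι β : Type*} [AddCommMonoid β] [LinearOrder β]
    [IsOrderedCancelAddMonoid β] (t : ι → β) (I : Finset ι) :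
    ∀ C : Finset β, #C = #I → ∃ g : ι → β, Set.BijOn g I C ∧ Set.InjOn (fun i => t i + g i) I := by
  induction I using induction_on_max_value t with
  | empty =>
    intro C hC
    rw [card_empty, card_eq_zero] at hC
    exact ⟨0, by simp [hC], by simp⟩
  | insert a I haI hmax ih =>
    intro C hC
    have hne : C.Nonempty := card_pos.mp (by rw [hC, card_insert_of_notMem haI]; omega)
    obtain ⟨g, hg, hinj⟩ := ih (C.erase (C.max' hne))
      (by rw [card_erase_of_mem (C.max'_mem hne), hC, card_insert_of_notMem haI]; rfl)
    have hupd : Set.EqOn (Function.update g a (C.max' hne)) g I :=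
      fun x hx => Function.update_of_ne (ne_of_mem_of_not_mem hx haI) _ _
    have hlt : ∀ x ∈ I, t x + g x < t a + C.max' hne := fun x hx =>
      have hgx := mem_erase.mp (hg.mapsTo hx)
      add_lt_add_of_le_of_lt (hmax x hx) (lt_of_le_of_ne (C.le_max' _ hgx.2) hgx.1)
    refine ⟨Function.update g a (C.max' hne), ?_, ?_⟩
    · have := (hg.congr hupd.symm).insert (a := a) (by simp)
      rwa [Function.update_self, ← coe_insert, ← coe_insert, insert_erase (C.max'_mem hne)] at this
    · rw [coe_insert, Set.injOn_insert haI]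
      refine ⟨hinj.congr fun x hx => by simp only [hupd hx], ?_⟩
      rintro ⟨x, hx, hxa⟩
      simp only [hupd hx, Function.update_self] at hxa
      exact (hlt x hx).ne hxa

theorem exists_bijOn_image_injOn_add {ι κ β : Type*} [Nonempty ι] [AddCommMonoid β] [LinearOrder β]
    [IsOrderedCancelAddMonoid β] (t : ι → β) {I : Finset ι} {d : ι → κ} (hd : Set.InjOn d I)
    (C : Finset β) (hC : #C = #I) :
    ∃ h : κ → β, Set.BijOn h (d '' I) C ∧ Set.InjOn (fun i => t i + h (d i)) I := by
  obtain ⟨g, hg, hinj⟩ := exists_bijOn_injOn_add t I C hC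
  have hinv := hd.bijOn_image.invOn_invFunOn
  refine ⟨g ∘ Function.invFunOn d I, hg.comp (hd.bijOn_image.symm hinv.symm), ?_⟩
  exact hinj.congr fun i hi => by simp only [Function.comp_apply, hinv.1 hi]

end Finset

namespace SimpleGraph

variable {V : Type*}

theorem Preconnected.mem_of_forall_adj_mem {G : SimpleGraph V} (hG : G.Preconnected) {S : Set V}
    (hS : ∀ x ∈ S, ∀ y, G.Adj x y → y ∈ S) {a : V} (ha : a ∈ S) (b : V) : b ∈ S := by
  by_contra hb
  obtain ⟨p⟩ := hG a b
  obtain ⟨d, -, hd₁, hd₂⟩ := p.exists_boundary_dart S ha hb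
  exact hd₂ (hS _ hd₁ _ d.adj)

theorem eq_of_adj_of_degree_eq_one {G : SimpleGraph V} {v u w : V} [Fintype (G.neighborSet v)]
    (hv : G.degree v = 1) (hu : G.Adj v u) (hw : G.Adj v w) : w = u :=
  (degree_eq_one_iff_existsUnique_adj.mp hv).unique hw hu

variable [Fintype V] {G : SimpleGraph V}

theorem mem_edgeFS {e : Sym2 V} : e ∈ edgeFS G ↔ e ∈ G.edgeSet := Set.mem_toFinset

theorem vSum_eq_sum_incidenceFinset (φ : Sym2 V → ℝ) (v : V) :
    vSum G φ v = ∑ e ∈ G.incidenceFinset v, φ e := by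
  refine sum_congr ?_ fun _ _ => rfl
  ext e
  simp [mem_edgeFS, incidenceSet]

theorem Preconnected.mem_of_forall_adj_degree_eq_one (hG : G.Preconnected) {v : V}
    (hv : ∀ y, G.Adj v y → G.degree y = 1) {e : Sym2 V} (he : e ∈ G.edgeSet) : v ∈ e := by
  have hS : ∀ x ∈ {x | x = v ∨ G.Adj v x}, ∀ y, G.Adj x y → y ∈ {x | x = v ∨ G.Adj v x} := by
    rintro x (rfl | hx) y hy
    · exact Or.inr hy
    · exact Or.inl (eq_of_adj_of_degree_eq_one (hv x hx) hx.symm hy)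
  induction e using Sym2.ind with
  | _ a b =>
    rcases hG.mem_of_forall_adj_mem hS (Or.inl rfl) a with rfl | ha
    · exact Sym2.mem_mk_left _ _
    · have hb : b = v := eq_of_adj_of_degree_eq_one (hv a ha) ha.symm he
      exact hb ▸ Sym2.mem_mk_right a b

theorem Preconnected.card_edgeFS_le_one_of_adj_of_degree_eq_one (hG : G.Preconnected) {a b : V} (hab : G.Adj a b)
    (ha : G.degree a = 1) (hb : G.degree b = 1) : #(edgeFS G) ≤ 1 := by
  have hS : ∀ x ∈ ({a, b} : Set V), ∀ y, G.Adj x y → y ∈ ({a, b} : Set V) := by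
    rintro x (rfl | rfl) y hy
    · exact Or.inr (eq_of_adj_of_degree_eq_one ha hab hy)
    · exact Or.inl (eq_of_adj_of_degree_eq_one hb hab.symm hy)
  refine (card_le_card (t := {s(a, b)}) fun e he => ?_).trans (card_singleton _).le
  induction e using Sym2.ind with
  | _ x y =>
    have hxy : G.Adj x y := mem_edgeFS.mp he
    rw [mem_singleton]
    rcases hG.mem_of_forall_adj_mem hS (Or.inl rfl) x with rfl | rfl
    · rw [eq_of_adj_of_degree_eq_one ha hab hxy]
    · rw [eq_of_adj_of_degree_eq_one hb hab.symm hxy, Sym2.eq_swap]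

theorem vSum_of_degree_eq_one (φ : Sym2 V → ℝ) {v u : V} (hv : G.degree v = 1) (hu : G.Adj v u) :
    vSum G φ v = φ s(v, u) := by
  obtain ⟨e, he⟩ := card_eq_one.mp ((G.card_incidenceFinset_eq_degree v).trans hv)
  have hmem : s(v, u) ∈ G.incidenceFinset v := by
    simpa [mem_incidenceFinset] using G.mk'_mem_incidenceSet_left_iff.mpr hu
  rw [he, mem_singleton] at hmem
  rw [vSum_eq_sum_incidenceFinset, he, sum_singleton, hmem]

theorem le_vSum {φ : Sym2 V → ℝ} (hφ : ∀ e ∈ edgeFS G, 0 ≤ φ e) {v : V} {e : Sym2 V}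
    (he : e ∈ G.incidenceSet v) : φ e ≤ vSum G φ v := by
  rw [vSum_eq_sum_incidenceFinset]
  exact single_le_sum (fun f hf => hφ f (mem_edgeFS.mpr ((mem_incidenceFinset _ _ _).mp hf).1))
    ((mem_incidenceFinset _ _ _).mpr he)

theorem add_le_vSum {φ : Sym2 V → ℝ} (hφ : ∀ e ∈ edgeFS G, 0 ≤ φ e) {v : V} {e f : Sym2 V}
    (he : e ∈ G.incidenceSet v) (hf : f ∈ G.incidenceSet v) (hef : e ≠ f) :
    φ e + φ f ≤ vSum G φ v := by
  rw [vSum_eq_sum_incidenceFinset, ← sum_pair hef]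
  refine sum_le_sum_of_subset_of_nonneg ?_ fun g hg _ =>
    hφ g (mem_edgeFS.mpr ((mem_incidenceFinset _ _ _).mp hg).1)
  simp [insert_subset_iff, he, hf]

variable (G) in
noncomputable def leafEdges : Finset (Sym2 V) :=
  (edgeFS G).filter fun e => ∃ v ∈ e, G.degree v = 1

variable (G) in
theorem leafEdges_subset_edgeFS : leafEdges G ⊆ edgeFS G := filter_subset _ _

theorem lt_vSum_of_mem_leafEdges (hG : G.Preconnected) {φ : Sym2 V → ℝ}
    (hpos : ∀ e ∈ edgeFS G, 0 < φ e)
    (hlt : ∀ e ∈ leafEdges G, ∀ f ∈ edgeFS G \ leafEdges G, φ e < φ f) {e : Sym2 V}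
    (he : e ∈ leafEdges G) {w : V} (hw : 2 ≤ G.degree w) : φ e < vSum G φ w := by
  have hnn : ∀ e ∈ edgeFS G, 0 ≤ φ e := fun e he => (hpos e he).le
  have heE := (mem_filter.mp he).1
  by_cases hwe : w ∈ e
  · obtain ⟨f, hf, hfe⟩ := exists_mem_ne (s := G.incidenceFinset w)
      (by rw [card_incidenceFinset_eq_degree]; omega) e
    rw [mem_incidenceFinset] at hf
    have := add_le_vSum hnn ⟨mem_edgeFS.mp heE, hwe⟩ hf hfe.symm
    linarith [hpos f (mem_edgeFS.mpr hf.1)]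
  · obtain ⟨y, hwy, hy⟩ : ∃ y, G.Adj w y ∧ G.degree y ≠ 1 := by
      by_contra! h
      exact hwe (hG.mem_of_forall_adj_degree_eq_one h (mem_edgeFS.mp heE))
    have hf : s(w, y) ∈ edgeFS G \ leafEdges G := by
      refine mem_sdiff.mpr ⟨mem_edgeFS.mpr hwy, fun hf => ?_⟩
      obtain ⟨z, hz, hz1⟩ := (mem_filter.mp hf).2
      rcases Sym2.mem_iff.mp hz with rfl | rfl <;> omega
    exact (hlt e he _ hf).trans_le (le_vSum hnn (G.mk'_mem_incidenceSet_left_iff.mpr hwy))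

theorem vSum_injective_of_leafEdges_lt (hG : G.Connected) (hE : 2 ≤ #(edgeFS G))
    {φ : Sym2 V → ℝ} (hinj : Set.InjOn φ (edgeFS G)) (hpos : ∀ e ∈ edgeFS G, 0 < φ e)
    (hlt : ∀ e ∈ leafEdges G, ∀ f ∈ edgeFS G \ leafEdges G, φ e < φ f)
    (hint : Set.InjOn (vSum G φ) {v | 2 ≤ G.degree v}) : Function.Injective (vSum G φ) := by
  have : Nontrivial V := by
    obtain ⟨e, he⟩ := card_pos.mp (by omega : 0 < #(edgeFS G))
    induction e using Sym2.ind with | _ a b => exact ⟨a, b, (mem_edgeFS.mp he).ne⟩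
  have hleaf : ∀ v, G.degree v < 2 →
      ∃ u, G.Adj v u ∧ G.degree v = 1 ∧ vSum G φ v = φ s(v, u) := by
    intro v hv
    have h1 : G.degree v = 1 := by have := hG.preconnected.degree_pos_of_nontrivial v; omega
    obtain ⟨u, hu, -⟩ := degree_eq_one_iff_existsUnique_adj.mp h1
    exact ⟨u, hu, h1, vSum_of_degree_eq_one φ h1 hu⟩
  have hmixed : ∀ v w, G.degree v < 2 → 2 ≤ G.degree w → vSum G φ v ≠ vSum G φ w := by
    intro v w hv hw
    obtain ⟨u, hu, h1, hsum⟩ := hleaf v hv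
    rw [hsum]
    exact (lt_vSum_of_mem_leafEdges hG.preconnected hpos hlt
      (mem_filter.mpr ⟨mem_edgeFS.mpr hu, v, Sym2.mem_mk_left _ _, h1⟩) hw).ne
  intro v w hvw
  rcases lt_or_ge (G.degree v) 2 with hv | hv <;> rcases lt_or_ge (G.degree w) 2 with hw | hw
  · obtain ⟨u, hu, hv1, hsv⟩ := hleaf v hv
    obtain ⟨u', hu', hw1, hsw⟩ := hleaf w hw
    rcases Sym2.eq_iff.mp (hinj (mem_edgeFS.mpr hu) (mem_edgeFS.mpr hu') (hsv ▸ hsw ▸ hvw)) with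
      ⟨hvw, -⟩ | ⟨-, rfl⟩
    · exact hvw
    · have := hG.preconnected.card_edgeFS_le_one_of_adj_of_degree_eq_one hu hv1 hw1
      omega
  · exact absurd hvw (hmixed v w hv hw)
  · exact absurd hvw.symm (hmixed w v hw hv)
  · exact hint hv hw hvw

theorem vSum_piecewise {D : Set (Sym2 V)} [DecidablePred (· ∈ D)] (ψ φ₀ : Sym2 V → ℝ) {v : V}
    {e₀ : Sym2 V} (he₀ : e₀ ∈ G.incidenceSet v) (he₀D : e₀ ∈ D) (hD : ∀ e ∈ D, v ∈ e → e = e₀) :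
    vSum G (D.piecewise ψ φ₀) v = ∑ e ∈ (G.incidenceFinset v).erase e₀, φ₀ e + ψ e₀ := by
  rw [vSum_eq_sum_incidenceFinset, ← add_sum_erase _ _ ((mem_incidenceFinset _ _ _).mpr he₀),
    Set.piecewise_eq_of_mem _ _ _ he₀D, add_comm]
  refine congrArg (· + ψ e₀) (sum_congr rfl fun e he => Set.piecewise_eq_of_notMem _ _ _ ?_)
  exact fun heD => ne_of_mem_erase he
    (hD e heD ((mem_incidenceFinset _ _ _).mp (mem_of_mem_erase he)).2)

theorem exists_bijOn_leafEdges_lt_injOn_vSum [Nonempty V]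
    (hsupp : ∀ v, 2 ≤ G.degree v → ∃ u, G.Adj v u ∧ G.degree u = 1) {L : Finset ℝ}
    (hL : #L = #(edgeFS G)) :
    ∃ φ : Sym2 V → ℝ, Set.BijOn φ (edgeFS G) L ∧
      (∀ e ∈ leafEdges G, ∀ f ∈ edgeFS G \ leafEdges G, φ e < φ f) ∧
      Set.InjOn (vSum G φ) {v | 2 ≤ G.degree v} := by
  obtain ⟨φ₀, hφ₀, hφ₀lt⟩ := exists_bijOn_forall_lt (leafEdges_subset_edgeFS G) hL
  choose! u hu using hsupp
  set I := univ.filter (2 ≤ G.degree ·)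
  set d : V → Sym2 V := fun v => s(v, u v)
  have hdI : ∀ v ∈ I, ∀ w ∈ I, v ∈ d w → v = w := by
    intro v hv w hw hvw
    rcases Sym2.mem_iff.mp hvw with rfl | rfl
    · rfl
    · have := (hu w (mem_filter.mp hw).2).2
      have := (mem_filter.mp hv).2
      omega
  have hd : Set.InjOn d I := fun v hv w hw h => hdI v hv w hw (h ▸ Sym2.mem_mk_left _ _)
  set D := I.image d
  have hDleaf : D ⊆ leafEdges G := by
    intro e he
    obtain ⟨v, hv, rfl⟩ := mem_image.mp he
    have huv := hu v (mem_filter.mp hv).2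
    exact mem_filter.mpr ⟨mem_edgeFS.mpr huv.1, u v, Sym2.mem_mk_right _ _, huv.2⟩
  have hDE : D ⊆ edgeFS G := hDleaf.trans (leafEdges_subset_edgeFS G)
  obtain ⟨ψ, hψ, hinj⟩ := exists_bijOn_image_injOn_add
    (fun v => ∑ e ∈ (G.incidenceFinset v).erase (d v), φ₀ e) hd (D.image φ₀)
    (by rw [card_image_of_injOn (hφ₀.injOn.mono (coe_subset.mpr hDE)), card_image_of_injOn hd])
  rw [coe_image (f := φ₀), ← coe_image (f := d)] at hψ
  refine ⟨(D : Set (Sym2 V)).piecewise ψ φ₀, ?_, ?_, ?_⟩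
  · exact hφ₀.piecewise_of_subset (coe_subset.mpr hDE) hψ
  · intro e he f hf
    have hfD : f ∉ D := fun hfD => (mem_sdiff.mp hf).2 (hDleaf hfD)
    rw [Set.piecewise_eq_of_notMem _ _ _ hfD]
    obtain ⟨e', he', hφe⟩ : ∃ e' ∈ leafEdges G, (D : Set (Sym2 V)).piecewise ψ φ₀ e = φ₀ e' := by
      by_cases heD : e ∈ D
      · obtain ⟨e', he'D, he'⟩ := hψ.mapsTo heD
        exact ⟨e', hDleaf he'D, by rw [Set.piecewise_eq_of_mem _ _ _ heD, he']⟩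
      · exact ⟨e, he, Set.piecewise_eq_of_notMem _ _ _ heD⟩
    exact hφe ▸ hφ₀lt e' he' f hf
  · have hI : (I : Set V) = {v | 2 ≤ G.degree v} := by ext; simp [I]
    rw [← hI]
    refine hinj.congr fun v hv => (vSum_piecewise ψ φ₀ ?_ (mem_image_of_mem d hv) ?_).symm
    · exact ⟨(hu v (mem_filter.mp hv).2).1, Sym2.mem_mk_left _ _⟩
    · intro e he hve
      obtain ⟨w, hw, rfl⟩ := mem_image.mp he
      rw [hdI v hv w hw hve]

end SimpleGraph

/-- Every connected graph with `m ≥ 3` edges in which every interior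
vertex (degree at least two) is a support vertex is universal antimagic. -/
theorem stmt_11 {V : Type*} [Fintype V] (G : SimpleGraph V) (m : ℕ) (hm : 3 ≤ m)
    (hcard : (edgeFS G).card = m) (hconn : G.Connected)
    (hsupp : ∀ v : V, 2 ≤ G.degree v → ∃ u : V, G.Adj v u ∧ G.degree u = 1) :
    UnivAntimagic G := by
  intro L hLpos hL
  have := hconn.nonempty
  obtain ⟨φ, hbij, hlt, hint⟩ := G.exists_bijOn_leafEdges_lt_injOn_vSum hsupp hL
  exact ⟨φ, hbij, G.vSum_injective_of_leafEdges_lt hconn (by omega) hbij.injOn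
    (fun e he => hLpos _ (hbij.mapsTo he)) hlt hint⟩
end

section
/- Let G be a connected simple graph with m edges, m ≥ 3. If every interior vertex of G is a support vertex, then G is universal product antimagic. -/
open scoped Classical

section AuxLemmas
variable {V : Type*} [Fintype V] {G : SimpleGraph V}

omit [Fintype V] in
lemma walk_closed_aux (S : Set V) (hS : ∀ x ∈ S, ∀ y, G.Adj x y → y ∈ S) :
    ∀ {x w : V}, G.Walk x w → x ∈ S → w ∈ S := by
  intro x w p
  induction p with
  | nil => exact fun h => h
  | cons h p ih => exact fun hx => ih (hS _ hx _ h)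

lemma unique_nbr_aux {x y z : V} (h1 : G.degree x = 1) (hy : G.Adj x y) (hz : G.Adj x z) :
    y = z := by
  have hc : (G.neighborFinset x).card ≤ 1 := by
    rw [SimpleGraph.card_neighborFinset_eq_degree, h1]
  exact Finset.card_le_one.mp hc y (by simpa using hy) z (by simpa using hz)

lemma no_leaf_edge_aux (hE : 3 ≤ (edgeFS G).card) (hconn : G.Connected)
    {u v : V} (huv : G.Adj u v) (hu : G.degree u = 1) (hv : G.degree v = 1) : False := by
  have hcl : ∀ x ∈ ({u, v} : Set V), ∀ y, G.Adj x y → y ∈ ({u, v} : Set V) := by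
    rintro x (rfl | rfl) y hxy
    · exact Or.inr (unique_nbr_aux hu huv hxy ▸ rfl)
    · exact Or.inl (unique_nbr_aux hv huv.symm hxy ▸ rfl)
  have hall : ∀ w, w ∈ ({u, v} : Set V) := fun w =>
    (hconn.preconnected u w).elim fun p => walk_closed_aux _ hcl p (Or.inl rfl)
  have hsub : edgeFS G ⊆ {s(u, v)} := by
    intro e he
    have he' : e ∈ G.edgeSet := by simpa [edgeFS] using he
    induction e with
    | _ a b =>
      have hab : G.Adj a b := he'
      have ha := hall a
      have hb := hall b
      simp only [Set.mem_insert_iff, Set.mem_singleton_iff] at ha hb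
      rcases ha with rfl | rfl <;> rcases hb with rfl | rfl
      · exact absurd rfl hab.ne
      · simp
      · simp [Sym2.eq_swap]
      · exact absurd rfl hab.ne
  have := Finset.card_le_card hsub
  simp only [Finset.card_singleton] at this
  omega

lemma degree_pos_aux (hE : 1 ≤ (edgeFS G).card) (hconn : G.Connected) (v : V) :
    0 < G.degree v := by
  rw [G.degree_pos_iff_exists_adj]
  obtain ⟨e, he⟩ := Finset.card_pos.mp hE
  have he' : e ∈ G.edgeSet := by simpa [edgeFS] using he
  have hex : ∃ u, u ≠ v := by
    induction e with
    | _ a b =>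
      by_cases ha : a = v
      · exact ⟨b, fun hb => (he' : G.Adj a b).ne (ha.trans hb.symm)⟩
      · exact ⟨a, ha⟩
  obtain ⟨u, hu⟩ := hex
  refine (hconn.preconnected v u).elim fun p => ?_
  cases p with
  | nil => exact absurd rfl hu.symm
  | cons h _ => exact ⟨_, h⟩


lemma one_le_prod_real {ι : Type*} {s : Finset ι} {f : ι → ℝ} (h : ∀ i ∈ s, 1 ≤ f i) :
    1 ≤ ∏ i ∈ s, f i := by
  calc (1:ℝ) = ∏ _i ∈ s, 1 := by simp
    _ ≤ ∏ i ∈ s, f i :=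
      Finset.prod_le_prod (fun i _ => zero_le_one) (fun i hi => h i hi)

lemma single_le_prod_real {ι : Type*} {s : Finset ι} {f : ι → ℝ} (h : ∀ i ∈ s, 1 ≤ f i)
    {a : ι} (ha : a ∈ s) : f a ≤ ∏ i ∈ s, f i := by
  classical
  rw [← Finset.mul_prod_erase s f ha]
  have h1 : (1:ℝ) ≤ ∏ i ∈ s.erase a, f i :=
    one_le_prod_real (fun i hi => h i (Finset.mem_of_mem_erase hi))
  nlinarith [h a ha]

lemma sym2_right_mem {α : Type*} {e : Sym2 α} {a b : α} (h : e = s(a,b)) : b ∈ e :=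
  h.symm ▸ Sym2.mem_mk_right a b

lemma sym2_left_mem {α : Type*} {e : Sym2 α} {a b : α} (h : e = s(a,b)) : a ∈ e :=
  h.symm ▸ Sym2.mem_mk_left a b

lemma lt_prod_of_mem_aux (L : Finset ℝ) (h1 : ∀ x ∈ L, 1 ≤ x) (h3 : 3 ≤ L.card) :
    ∀ x ∈ L, x < ∏ y ∈ L, y := by
  intro x hx
  have h2 : 1 < (L.erase x).card := by rw [Finset.card_erase_of_mem hx]; omega
  obtain ⟨a, ha, b, hb, hab⟩ := Finset.one_lt_card.mp h2
  have h1' : ∀ y ∈ L.erase x, (1:ℝ) ≤ y := fun y hy => h1 y (Finset.mem_of_mem_erase hy)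
  have hone : (1:ℝ) < ∏ y ∈ L.erase x, y := by
    have hor : (1:ℝ) < a ∨ (1:ℝ) < b := by
      by_contra h; push_neg at h
      have haa : a = 1 := le_antisymm h.1 (h1' a ha)
      have hbb : b = 1 := le_antisymm h.2 (h1' b hb)
      exact hab (haa.trans hbb.symm)
    rcases hor with h | h
    · exact lt_of_lt_of_le h (single_le_prod_real (f := fun y => y) h1' ha)
    · exact lt_of_lt_of_le h (single_le_prod_real (f := fun y => y) h1' hb)
  calc x = x * 1 := (mul_one x).symm
    _ < x * ∏ y ∈ L.erase x, y :=
        mul_lt_mul_of_pos_left hone (lt_of_lt_of_le one_pos (h1 x hx))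
    _ = ∏ y ∈ L, y := Finset.mul_prod_erase L (fun y => y) hx

end AuxLemmas

/-- Every connected graph with `m ≥ 3` edges in which every interior
vertex (degree at least two) is a support vertex is universal product antimagic. -/
theorem stmt_12 {V : Type*} [Fintype V] (G : SimpleGraph V) (m : ℕ) (hm : 3 ≤ m)
    (hcard : (edgeFS G).card = m) (hconn : G.Connected)
    (hsupp : ∀ v : V, 2 ≤ G.degree v → ∃ u : V, G.Adj v u ∧ G.degree u = 1) :
    UnivProdAntimagic G := by
  classical
  have hVne : Nonempty V := hconn.nonempty
  have hSne : Nonempty (Sym2 V) := Nonempty.map (fun v => s(v,v)) hVne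
  intro L hL1 hLcard
  have hE3 : 3 ≤ (edgeFS G).card := hcard ▸ hm
  have hdeg1 : ∀ v, 1 ≤ G.degree v := fun v => degree_pos_aux (by omega) hconn v
  have hnoLL : ∀ {a b : V}, G.Adj a b → G.degree a = 1 → G.degree b = 1 → False :=
    fun hab ha hb => no_leaf_edge_aux hE3 hconn hab ha hb
  -- incidence sets
  have hinccard : ∀ v, ((edgeFS G).filter (fun e => v ∈ e)).card = G.degree v := by
    intro v
    have hset : (edgeFS G).filter (fun e => v ∈ e) = G.incidenceFinset v := by
      ext e
      simp [edgeFS, SimpleGraph.mem_incidenceFinset, SimpleGraph.incidenceSet,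
        Set.mem_toFinset]
    rw [hset, SimpleGraph.card_incidenceFinset_eq_degree]
  -- pendant edges
  set P : Finset (Sym2 V) := (edgeFS G).filter (fun e => ∃ v ∈ e, G.degree v = 1) with hPdef
  set N : Finset (Sym2 V) := edgeFS G \ P with hNdef
  have hPE : P ⊆ edgeFS G := Finset.filter_subset _ _
  have hNE : N ⊆ edgeFS G := Finset.sdiff_subset
  have hPspec : ∀ e ∈ P, ∃ a b : V, e = s(a,b) ∧ G.Adj a b ∧ G.degree a = 1 ∧ 2 ≤ G.degree b := by
    intro e
    induction e with
    | _ x y =>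
      intro he
      obtain ⟨hEe, v0, hv0e, hv0⟩ := Finset.mem_filter.mp he
      have hxy : G.Adj x y := by
        have : s(x,y) ∈ G.edgeSet := by simpa [edgeFS] using hEe
        exact this
      rcases Sym2.mem_iff.mp hv0e with rfl | rfl
      · have hy2 : 2 ≤ G.degree y := by
          by_contra hcon
          have hy1 : G.degree y = 1 := by have := hdeg1 y; omega
          exact hnoLL hxy hv0 hy1
        exact ⟨v0, y, rfl, hxy, hv0, hy2⟩
      · have hx2 : 2 ≤ G.degree x := by
          by_contra hcon
          have hx1 : G.degree x = 1 := by have := hdeg1 x; omega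
          exact hnoLL hxy hx1 hv0
        exact ⟨v0, x, Sym2.eq_swap, hxy.symm, hv0, hx2⟩
  choose! lf sup heq hadj hlf hsup using hPspec
  have hsupmem : ∀ e ∈ P, sup e ∈ e := fun e he => sym2_right_mem (heq e he)
  have hlfmem : ∀ e ∈ P, lf e ∈ e := fun e he => sym2_left_mem (heq e he)
  -- chosen pendant edges
  have hchspec : ∀ u : V, 2 ≤ G.degree u → ∃ e ∈ P, sup e = u := by
    intro u hu
    obtain ⟨w, hadjuw, hw1⟩ := hsupp u hu
    have hmemE : s(u,w) ∈ edgeFS G := by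
      simp only [edgeFS, Set.mem_toFinset, SimpleGraph.mem_edgeSet]
      exact hadjuw
    have hPm : s(u,w) ∈ P := Finset.mem_filter.mpr ⟨hmemE, ⟨w, Sym2.mem_mk_right u w, hw1⟩⟩
    refine ⟨s(u,w), hPm, ?_⟩
    rcases Sym2.mem_iff.mp (hsupmem _ hPm) with h | h
    · exact h
    · exfalso
      have h2 := hsup _ hPm
      rw [h, hw1] at h2
      omega
  choose! ch hchP hchsup using hchspec
  -- interior vertices and chosen edge set
  set I : Finset V := Finset.univ.filter (fun v => 2 ≤ G.degree v) with hIdef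
  have hmemI : ∀ v, v ∈ I ↔ 2 ≤ G.degree v := by intro v; simp [hIdef]
  set C : Finset (Sym2 V) := I.image ch with hCdef
  have hchinj : Set.InjOn ch I := by
    intro a ha b hb h
    rw [← hchsup a ((hmemI a).mp ha), ← hchsup b ((hmemI b).mp hb), h]
  have hCP : C ⊆ P := by
    intro e he
    obtain ⟨u, hu, rfl⟩ := Finset.mem_image.mp he
    exact hchP u ((hmemI u).mp hu)
  have hsupI : ∀ e ∈ C, sup e ∈ I := by
    intro e he
    obtain ⟨u, hu, rfl⟩ := Finset.mem_image.mp he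
    rw [hchsup u ((hmemI u).mp hu)]; exact hu
  have hchsupC : ∀ e ∈ C, ch (sup e) = e := by
    intro e he
    obtain ⟨u, hu, rfl⟩ := Finset.mem_image.mp he
    rw [hchsup u ((hmemI u).mp hu)]
  -- cardinalities
  have hCcard : C.card = I.card := Finset.card_image_of_injOn hchinj
  have hc1 : (P \ C).card + C.card = P.card := Finset.card_sdiff_add_card_eq_card hCP
  have hc2 : N.card + P.card = (edgeFS G).card := by
    rw [hNdef]; exact Finset.card_sdiff_add_card_eq_card hPE
  have hkp : I.card ≤ P.card := by omega
  have hpm : P.card ≤ (edgeFS G).card := by omega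
  -- labels
  have hLc : L.card = (edgeFS G).card := hLcard
  set ι := L.orderIsoOfFin hLc with hιdef
  set lab : Fin (edgeFS G).card → ℝ := fun i => (ι i : ℝ) with hlabdef
  have hlabmono : StrictMono lab := fun i j h => by
    have := ι.strictMono h
    exact this
  have hlabmem : ∀ i, lab i ∈ L := fun i => (ι i).2
  have hlab1 : ∀ i, 1 ≤ lab i := fun i => hL1 _ (hlabmem i)
  have hlabinj : Function.Injective lab := hlabmono.injective
  -- enumerations
  set eI := I.equivFin with heIdef
  set ePC := (P \ C).equivFin with hePCdef
  set eN := N.equivFin with heNdef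
  have hb1 : ∀ j : Fin (P \ C).card, I.card + (j : ℕ) < (edgeFS G).card := by
    intro j; have := j.2; omega
  have hb2 : ∀ j : Fin N.card, P.card + (j : ℕ) < (edgeFS G).card := by
    intro j; have := j.2; omega
  have hb3 : ∀ j : Fin I.card, (j : ℕ) < (edgeFS G).card := by
    intro j; have := j.2; omega
  -- the labeling of non-chosen edges
  set ψ : Sym2 V → ℝ := fun e =>
    if h : e ∈ P \ C then lab ⟨I.card + (ePC ⟨e, h⟩ : ℕ), hb1 _⟩
    else if h' : e ∈ N then lab ⟨P.card + (eN ⟨e, h'⟩ : ℕ), hb2 _⟩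
    else 1 with hψdef
  have hψ1 : ∀ e, 1 ≤ ψ e := by
    intro e; rw [hψdef]; dsimp only; split_ifs
    · exact hlab1 _
    · exact hlab1 _
    · exact le_refl 1
  -- products over non-chosen incident edges
  set Cval : V → ℝ := fun u => ∏ e ∈ ((edgeFS G).filter (fun e => u ∈ e)).erase (ch u), ψ e
    with hCvaldef
  have hCval1 : ∀ u, 1 ≤ Cval u := fun u => one_le_prod_real (fun e _ => hψ1 e)
  set fI : Fin I.card → ℝ := fun j => Cval ((eI.symm j) : V) with hfIdef
  set σ := Tuple.sort fI with hσdef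
  have hfmono : Monotone (fI ∘ σ) := Tuple.monotone_sort fI
  -- the labeling
  set φ : Sym2 V → ℝ := fun e =>
    if h : e ∈ C then lab ⟨(σ.symm (eI ⟨sup e, hsupI e h⟩) : ℕ), hb3 _⟩ else ψ e with hφdef
  have hφψ : ∀ e, e ∉ C → φ e = ψ e := by
    intro e he; rw [hφdef]; exact dif_neg he
  have hφ1 : ∀ e, 1 ≤ φ e := by
    intro e; rw [hφdef]; dsimp only; split_ifs
    · exact hlab1 _
    · exact hψ1 e
  have hφC : ∀ (x : ↥I), φ (ch x) = lab ⟨(σ.symm (eI x) : ℕ), hb3 _⟩ := by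
    intro x
    have hc : ch ↑x ∈ C := Finset.mem_image_of_mem ch x.2
    rw [hφdef]; dsimp only; rw [dif_pos hc]
    congr 2
    have hx : (⟨sup (ch ↑x), hsupI _ hc⟩ : ↥I) = x :=
      Subtype.ext (hchsup ↑x ((hmemI ↑x).mp x.2))
    rw [hx]
  have hφCe : ∀ e, ∀ hc : e ∈ C, φ e = lab ⟨(σ.symm (eI ⟨sup e, hsupI e hc⟩) : ℕ), hb3 _⟩ := by
    intro e hc
    conv_lhs => rw [← hchsupC e hc]
    exact hφC ⟨sup e, hsupI e hc⟩
  have hψPCe : ∀ e, ∀ h : e ∈ P \ C, ψ e = lab ⟨I.card + (ePC ⟨e, h⟩ : ℕ), hb1 _⟩ := by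
    intro e h
    rw [hψdef]; dsimp only; rw [dif_pos h]
  -- case analysis on membership
  have hEsplit : ∀ e ∈ edgeFS G, e ∈ C ∨ e ∈ P \ C ∨ e ∈ N := by
    intro e he
    by_cases hp : e ∈ P
    · by_cases hc : e ∈ C
      · exact Or.inl hc
      · exact Or.inr (Or.inl (Finset.mem_sdiff.mpr ⟨hp, hc⟩))
    · exact Or.inr (Or.inr (Finset.mem_sdiff.mpr ⟨he, hp⟩))
  have hCN : ∀ e, e ∈ C → e ∈ N → False := by
    intro e hc hn; exact (Finset.mem_sdiff.mp hn).2 (hCP hc)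
  have hψNe : ∀ e, ∀ h : e ∈ N, ψ e = lab ⟨P.card + (eN ⟨e, h⟩ : ℕ), hb2 _⟩ := by
    intro e h
    have hnp : e ∉ P \ C := fun hx => (Finset.mem_sdiff.mp h).2 (Finset.mem_sdiff.mp hx).1
    rw [hψdef]; dsimp only; rw [dif_neg hnp, dif_pos h]
  have hφPCe : ∀ e, ∀ h : e ∈ P \ C, φ e = lab ⟨I.card + (ePC ⟨e, h⟩ : ℕ), hb1 _⟩ :=
    fun e h => (hφψ e (Finset.mem_sdiff.mp h).2).trans (hψPCe e h)
  have hφNe : ∀ e, ∀ h : e ∈ N, φ e = lab ⟨P.card + (eN ⟨e, h⟩ : ℕ), hb2 _⟩ :=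
    fun e h => (hφψ e (fun hc => hCN e hc h)).trans (hψNe e h)
  -- index range facts
  have hφidx : ∀ e ∈ edgeFS G, ∃ i : Fin (edgeFS G).card, φ e = lab i ∧
      ((e ∈ C ∧ (i:ℕ) < I.card) ∨ (e ∈ P \ C ∧ I.card ≤ (i:ℕ) ∧ (i:ℕ) < P.card) ∨
       (e ∈ N ∧ P.card ≤ (i:ℕ))) := by
    intro e he
    rcases hEsplit e he with hc | hpc | hn
    · refine ⟨⟨(σ.symm (eI ⟨sup e, hsupI e hc⟩) : ℕ), hb3 _⟩, ?_, Or.inl ⟨hc, (σ.symm (eI ⟨sup e, hsupI e hc⟩)).is_lt⟩⟩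
      have hce : ch (sup e) = e := hchsupC e hc
      conv_lhs => rw [← hce]
      exact hφC ⟨sup e, hsupI e hc⟩
    · have hnc : e ∉ C := (Finset.mem_sdiff.mp hpc).2
      refine ⟨⟨I.card + (ePC ⟨e, hpc⟩ : ℕ), hb1 _⟩, ?_,
        Or.inr (Or.inl ⟨hpc, Nat.le_add_right _ _, ?_⟩)⟩
      · rw [hφψ e hnc, hψdef]; dsimp only; rw [dif_pos hpc]
      · have h2 := (ePC ⟨e, hpc⟩).2
        show I.card + ((ePC ⟨e, hpc⟩ : Fin (P \ C).card) : ℕ) < P.card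
        omega
    · have hnc : e ∉ C := fun hc => hCN e hc hn
      have hnp : e ∉ P \ C := fun h => (Finset.mem_sdiff.mp hn).2 (Finset.mem_sdiff.mp h).1
      refine ⟨⟨P.card + (eN ⟨e, hn⟩ : ℕ), hb2 _⟩, ?_,
        Or.inr (Or.inr ⟨hn, Nat.le_add_right _ _⟩)⟩
      rw [hφψ e hnc, hψdef]; dsimp only; rw [dif_neg hnp, dif_pos hn]
  -- injectivity of φ on E
  have hinjE : Set.InjOn φ ↑(edgeFS G) := by
    intro e1 h1 e2 h2 hfe
    have h1' : e1 ∈ edgeFS G := h1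
    have h2' : e2 ∈ edgeFS G := h2
    rcases hEsplit e1 h1' with hc1 | hp1 | hn1 <;> rcases hEsplit e2 h2' with hc2 | hp2 | hn2
    · rw [hφCe e1 hc1, hφCe e2 hc2] at hfe
      have hvv := hlabinj hfe
      simp only [Fin.mk.injEq] at hvv
      have hfin : σ.symm (eI ⟨sup e1, hsupI e1 hc1⟩) = σ.symm (eI ⟨sup e2, hsupI e2 hc2⟩) :=
        Fin.ext hvv
      have hsub := eI.injective (σ.symm.injective hfin)
      have hsupeq : sup e1 = sup e2 := congrArg Subtype.val hsub
      rw [← hchsupC e1 hc1, ← hchsupC e2 hc2, hsupeq]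
    · exfalso
      rw [hφCe e1 hc1, hφPCe e2 hp2] at hfe
      have hvv := hlabinj hfe
      simp only [Fin.mk.injEq] at hvv
      have b1 := (σ.symm (eI ⟨sup e1, hsupI e1 hc1⟩)).is_lt
      omega
    · exfalso
      rw [hφCe e1 hc1, hφNe e2 hn2] at hfe
      have hvv := hlabinj hfe
      simp only [Fin.mk.injEq] at hvv
      have b1 := (σ.symm (eI ⟨sup e1, hsupI e1 hc1⟩)).is_lt
      omega
    · exfalso
      rw [hφPCe e1 hp1, hφCe e2 hc2] at hfe
      have hvv := hlabinj hfe
      simp only [Fin.mk.injEq] at hvv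
      have b1 := (σ.symm (eI ⟨sup e2, hsupI e2 hc2⟩)).is_lt
      omega
    · rw [hφPCe e1 hp1, hφPCe e2 hp2] at hfe
      have hvv := hlabinj hfe
      simp only [Fin.mk.injEq] at hvv
      have hfin : ePC ⟨e1, hp1⟩ = ePC ⟨e2, hp2⟩ := Fin.ext (by omega)
      exact congrArg Subtype.val (ePC.injective hfin)
    · exfalso
      rw [hφPCe e1 hp1, hφNe e2 hn2] at hfe
      have hvv := hlabinj hfe
      simp only [Fin.mk.injEq] at hvv
      have b1 := (ePC ⟨e1, hp1⟩).2
      omega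
    · exfalso
      rw [hφNe e1 hn1, hφCe e2 hc2] at hfe
      have hvv := hlabinj hfe
      simp only [Fin.mk.injEq] at hvv
      have b1 := (σ.symm (eI ⟨sup e2, hsupI e2 hc2⟩)).is_lt
      omega
    · exfalso
      rw [hφNe e1 hn1, hφPCe e2 hp2] at hfe
      have hvv := hlabinj hfe
      simp only [Fin.mk.injEq] at hvv
      have b1 := (ePC ⟨e2, hp2⟩).2
      omega
    · rw [hφNe e1 hn1, hφNe e2 hn2] at hfe
      have hvv := hlabinj hfe
      simp only [Fin.mk.injEq] at hvv
      have hfin : eN ⟨e1, hn1⟩ = eN ⟨e2, hn2⟩ := Fin.ext (by omega)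
      exact congrArg Subtype.val (eN.injective hfin)
  -- image
  have himg : (edgeFS G).image φ = L := by
    apply Finset.eq_of_subset_of_card_le
    · intro x hx
      obtain ⟨e, he, rfl⟩ := Finset.mem_image.mp hx
      obtain ⟨i, hi, _⟩ := hφidx e he
      rw [hi]; exact hlabmem i
    · rw [Finset.card_image_of_injOn hinjE, hLc]
  refine ⟨φ, ⟨?_, hinjE, ?_⟩, ?_⟩
  · intro e he
    have : φ e ∈ (edgeFS G).image φ := Finset.mem_image_of_mem φ (by exact_mod_cast he)
    rw [himg] at this; exact_mod_cast this
  · intro x hx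
    have : x ∈ (edgeFS G).image φ := by rw [himg]; exact_mod_cast hx
    obtain ⟨e, he, hee⟩ := Finset.mem_image.mp this
    exact ⟨e, by exact_mod_cast he, hee⟩
  -- injectivity of vProd
  · have hCvalrw : ∀ u, Cval u = ∏ e ∈ ((edgeFS G).filter (fun e => u ∈ e)).erase (ch u), ψ e :=
      fun u => rfl
    have hvproddef : ∀ v, vProd G φ v = ∏ e ∈ (edgeFS G).filter (fun e => v ∈ e), φ e :=
      fun v => rfl
    have hleaf : ∀ v, G.degree v = 1 → ∃ e, e ∈ P ∧ v ∈ e ∧ vProd G φ v = φ e := by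
      intro v hv
      have hcard1 : ((edgeFS G).filter (fun e => v ∈ e)).card = 1 := by rw [hinccard v, hv]
      obtain ⟨e, he⟩ := Finset.card_eq_one.mp hcard1
      have hein : e ∈ (edgeFS G).filter (fun e => v ∈ e) := by
        rw [he]; exact Finset.mem_singleton_self e
      have heE := (Finset.mem_filter.mp hein).1
      have hv_e := (Finset.mem_filter.mp hein).2
      refine ⟨e, Finset.mem_filter.mpr ⟨heE, ⟨v, hv_e, hv⟩⟩, hv_e, ?_⟩
      rw [hvproddef v, he, Finset.prod_singleton]
    have hchmem : ∀ u, 2 ≤ G.degree u → ch u ∈ (edgeFS G).filter (fun e => u ∈ e) := by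
      intro u hu
      refine Finset.mem_filter.mpr ⟨hPE (hchP u hu), ?_⟩
      have hm := hsupmem (ch u) (hchP u hu)
      rwa [hchsup u hu] at hm
    have hint : ∀ u, 2 ≤ G.degree u → vProd G φ u = Cval u * φ (ch u) := by
      intro u hu
      rw [hvproddef u, ← Finset.prod_erase_mul _ _ (hchmem u hu), hCvalrw u]
      congr 1
      refine Finset.prod_congr rfl ?_
      intro e he
      apply hφψ
      intro hcE
      have hne2 := Finset.ne_of_mem_erase he
      have heP : e ∈ P := hCP hcE
      have hue : u ∈ e := (Finset.mem_filter.mp (Finset.mem_of_mem_erase he)).2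
      have hequ := heq e heP
      rw [hequ, Sym2.mem_iff] at hue
      rcases hue with h | h
      · have hl := hlf e heP
        rw [← h] at hl
        omega
      · exact hne2 (by rw [← hchsupC e hcE, ← h])
    have hLI : ∀ v u, G.degree v = 1 → 2 ≤ G.degree u → vProd G φ v < vProd G φ u := by
      intro v u hv hu
      obtain ⟨ev, hevP, hvev, hveq⟩ := hleaf v hv
      obtain ⟨i, hi, hri⟩ := hφidx ev (hPE hevP)
      have hiP : (i:ℕ) < P.card := by
        rcases hri with ⟨_, h⟩ | ⟨_, _, h⟩ | ⟨hnn, _⟩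
        · omega
        · exact h
        · exact absurd hevP (Finset.mem_sdiff.mp hnn).2
      rw [hveq, hi]
      by_cases hex : ∃ e ∈ ((edgeFS G).filter (fun e => u ∈ e)).erase (ch u), e ∈ N
      · obtain ⟨e', he', hN'⟩ := hex
        have h1 : lab i < ψ e' := by
          rw [hψNe e' hN']
          apply hlabmono
          show (i:ℕ) < P.card + (eN ⟨e', hN'⟩ : ℕ)
          omega
        have h2 : ψ e' ≤ Cval u := by
          rw [hCvalrw u]
          exact single_le_prod_real (fun e _ => hψ1 e) he'
        have h3 : (1:ℝ) ≤ φ (ch u) := hφ1 _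
        have h4 : (0:ℝ) < Cval u := lt_of_lt_of_le one_pos (hCval1 u)
        rw [hint u hu]
        nlinarith
      · push_neg at hex
        have hallP : ∀ e ∈ (edgeFS G).filter (fun e => u ∈ e), e ∈ P := by
          intro e he
          by_cases hech : e = ch u
          · rw [hech]; exact hchP u hu
          · by_contra hnp
            have heN : e ∈ N := Finset.mem_sdiff.mpr ⟨(Finset.mem_filter.mp he).1, hnp⟩
            exact hex e (Finset.mem_erase.mpr ⟨hech, he⟩) heN
        have hnbr : ∀ x, G.Adj u x → G.degree x = 1 := by
          intro x hx
          have hmE : s(u,x) ∈ edgeFS G := by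
            simp only [edgeFS, Set.mem_toFinset, SimpleGraph.mem_edgeSet]; exact hx
          have hmf : s(u,x) ∈ (edgeFS G).filter (fun e => u ∈ e) :=
            Finset.mem_filter.mpr ⟨hmE, Sym2.mem_mk_left u x⟩
          have hp := hallP _ hmf
          have hl := hlf _ hp
          rcases Sym2.mem_iff.mp (hlfmem _ hp) with h | h
          · rw [h] at hl; omega
          · rwa [h] at hl
        have hclosed : ∀ y ∈ {z | z = u ∨ G.Adj u z}, ∀ z, G.Adj y z →
            z ∈ {z | z = u ∨ G.Adj u z} := by
          rintro y hy z hyz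
          rcases hy with rfl | hyu
          · exact Or.inr hyz
          · exact Or.inl (unique_nbr_aux (hnbr y hyu) hyz hyu.symm)
        have hall : ∀ z, z = u ∨ G.Adj u z := fun z =>
          (hconn.preconnected u z).elim fun pth => walk_closed_aux _ hclosed pth (Or.inl rfl)
        have hfeq : (edgeFS G).filter (fun e => u ∈ e) = edgeFS G := by
          apply Finset.filter_true_of_mem
          intro e
          induction e with
          | _ a b =>
            intro he
            have hab : G.Adj a b := by
              have h' : s(a,b) ∈ G.edgeSet := by simpa [edgeFS] using he
              exact h'
            rcases hall a with rfl | ha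
            · exact Sym2.mem_mk_left _ _
            · rcases hall b with rfl | hb
              · exact Sym2.mem_mk_right _ _
              · exact absurd hab (fun h => hnoLL h (hnbr a ha) (hnbr b hb))
        have hinj' : ∀ x ∈ edgeFS G, ∀ y ∈ edgeFS G, φ x = φ y → x = y := fun x hx y hy hxy =>
          hinjE (Finset.mem_coe.mpr hx) (Finset.mem_coe.mpr hy) hxy
        have hvu : vProd G φ u = ∏ y ∈ L, y := by
          rw [hvproddef u, hfeq, ← himg, Finset.prod_image hinj']
        rw [hvu]
        exact lt_prod_of_mem_aux L hL1 (by omega) _ (hlabmem i)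
    have hII : ∀ x y : ↥I, σ.symm (eI x) < σ.symm (eI y) →
        vProd G φ ↑x < vProd G φ ↑y := by
      intro x y hlt
      have hux : 2 ≤ G.degree ↑x := (hmemI ↑x).mp x.2
      have huy : 2 ≤ G.degree ↑y := (hmemI ↑y).mp y.2
      rw [hint ↑x hux, hint ↑y huy, hφC x, hφC y]
      have hxx : fI (σ (σ.symm (eI x))) = Cval ↑x := by
        simp [hfIdef]
      have hyy : fI (σ (σ.symm (eI y))) = Cval ↑y := by
        simp [hfIdef]
      have hmle : Cval ↑x ≤ Cval ↑y := by
        rw [← hxx, ← hyy]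
        exact hfmono (le_of_lt hlt)
      have hlabx : lab ⟨(σ.symm (eI x) : ℕ), hb3 _⟩ < lab ⟨(σ.symm (eI y) : ℕ), hb3 _⟩ := by
        apply hlabmono
        show ((σ.symm (eI x) : ℕ)) < ((σ.symm (eI y) : ℕ))
        exact hlt
      have h4 : (0:ℝ) < Cval ↑y := lt_of_lt_of_le one_pos (hCval1 ↑y)
      have h5 : (0:ℝ) ≤ lab ⟨(σ.symm (eI x) : ℕ), hb3 _⟩ := le_trans zero_le_one (hlab1 _)
      calc Cval ↑x * lab ⟨(σ.symm (eI x) : ℕ), hb3 _⟩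
          ≤ Cval ↑y * lab ⟨(σ.symm (eI x) : ℕ), hb3 _⟩ := mul_le_mul_of_nonneg_right hmle h5
        _ < Cval ↑y * lab ⟨(σ.symm (eI y) : ℕ), hb3 _⟩ := mul_lt_mul_of_pos_left hlabx h4
    intro v w hvw
    by_contra hne
    have hv1 := hdeg1 v
    have hw1 := hdeg1 w
    rcases (show G.degree v = 1 ∨ 2 ≤ G.degree v from by omega) with hv | hv <;>
      rcases (show G.degree w = 1 ∨ 2 ≤ G.degree w from by omega) with hw | hw
    · obtain ⟨ev, hevP, hvev, hveq⟩ := hleaf v hv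
      obtain ⟨ew, hewP, hwew, hweq⟩ := hleaf w hw
      have hphi : φ ev = φ ew := by rw [← hveq, ← hweq, hvw]
      have hee : ev = ew :=
        hinjE (Finset.mem_coe.mpr (hPE hevP)) (Finset.mem_coe.mpr (hPE hewP)) hphi
      have hvw_e : ev = s(v,w) := (Sym2.mem_and_mem_iff hne).mp
        ⟨hvev, by rw [hee]; exact hwew⟩
      have hadjvw : G.Adj v w := by
        have heE : ev ∈ G.edgeSet := by simpa [edgeFS] using hPE hevP
        rwa [hvw_e, SimpleGraph.mem_edgeSet] at heE
      exact hnoLL hadjvw hv hw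
    · exact absurd hvw (ne_of_lt (hLI v w hv hw))
    · exact absurd hvw (ne_of_gt (hLI w v hw hv))
    · have hvI : v ∈ I := (hmemI v).mpr hv
      have hwI : w ∈ I := (hmemI w).mpr hw
      have hxy : σ.symm (eI ⟨v, hvI⟩) ≠ σ.symm (eI ⟨w, hwI⟩) := by
        intro h
        exact hne (congrArg Subtype.val (eI.injective (σ.symm.injective h)))
      rcases lt_or_gt_of_ne hxy with h | h
      · exact absurd hvw (ne_of_lt (hII ⟨v, hvI⟩ ⟨w, hwI⟩ h))
      · exact absurd hvw (ne_of_gt (hII ⟨w, hwI⟩ ⟨v, hvI⟩ h))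
end

section
/- Let H be a spanning subgraph of a graph G. If H is weighted universal antimagic, then G is weighted universal antimagic. -/
open scoped Classical

/-- If a spanning subgraph `H` of `G` is weighted universal antimagic,
then so is `G`. -/
theorem stmt_19 {V : Type*} [Fintype V] (H G : SimpleGraph V) (hHG : H ≤ G)
    (hH : WeightedUnivAntimagic H) :
    WeightedUnivAntimagic G := by
  intro w hw L hL hcard
  have hsub : edgeFS H ⊆ edgeFS G := by
    intro e he
    simp only [edgeFS, Set.mem_toFinset] at *
    exact SimpleGraph.edgeSet_mono hHG he
  set D : Finset (Sym2 V) := edgeFS G \ edgeFS H with hDdef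
  have hunion : edgeFS H ∪ D = edgeFS G := Finset.union_sdiff_of_subset hsub
  have hdisj : Disjoint (edgeFS H) D := Finset.disjoint_sdiff
  have hDcard : D.card = (edgeFS G).card - (edgeFS H).card := Finset.card_sdiff_of_subset hsub
  have hHle : (edgeFS H).card ≤ (edgeFS G).card := Finset.card_le_card hsub
  have hDle : D.card ≤ L.card := by omega
  obtain ⟨S, hSL, hScard⟩ := Finset.exists_subset_card_eq hDle
  have eqv : ↥D ≃ ↥S := Finset.equivOfCardEq (by omega)
  set ψ : Sym2 V → ℝ := fun e => if h : e ∈ D then ((eqv ⟨e, h⟩ : ℝ)) else 0 with hψdef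
  have hψmem : ∀ e ∈ D, ψ e ∈ S := by
    intro e he
    simp only [hψdef, dif_pos he]
    exact (eqv ⟨e, he⟩).2
  have hψpos : ∀ e ∈ D, 0 < ψ e := fun e he => hL _ (hSL (hψmem e he))
  set w' : V → ℝ := fun v => w v + ∑ e ∈ D.filter (fun e => v ∈ e), ψ e with hw'def
  have hw' : ∀ v, 0 < w' v := by
    intro v
    have : 0 ≤ ∑ e ∈ D.filter (fun e => v ∈ e), ψ e :=
      Finset.sum_nonneg fun e he => (hψpos e (Finset.mem_filter.mp he).1).le
    have := hw v
    simp only [hw'def]; linarith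
  set L' : Finset ℝ := L \ S with hL'def
  have hL'pos : ∀ x ∈ L', 0 < x := fun x hx => hL x (Finset.mem_sdiff.mp hx).1
  have hL'card : L'.card = (edgeFS H).card := by
    have h1 : L'.card = L.card - S.card := Finset.card_sdiff_of_subset hSL
    omega
  obtain ⟨φH, hbij, hinj⟩ := hH w' hw' L' hL'pos hL'card
  set φ : Sym2 V → ℝ := fun e => if e ∈ edgeFS H then φH e else ψ e with hφdef
  have hφH : ∀ e ∈ edgeFS H, φ e = φH e := fun e he => by simp [hφdef, he]
  have hφD : ∀ e ∈ D, φ e = ψ e := by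
    intro e he
    have : e ∉ edgeFS H := (Finset.mem_sdiff.mp he).2
    simp [hφdef, this]
  have hsum : ∀ v, vSum G φ v = vSum H φH v + ∑ e ∈ D.filter (fun e => v ∈ e), ψ e := by
    intro v
    unfold vSum
    rw [← hunion, Finset.filter_union, Finset.sum_union (Finset.disjoint_filter_filter hdisj)]
    congr 1
    · exact Finset.sum_congr rfl fun e he => hφH e (Finset.mem_filter.mp he).1
    · exact Finset.sum_congr rfl fun e he => hφD e (Finset.mem_filter.mp he).1
  refine ⟨φ, ?_, ?_⟩
  · constructor
    · -- MapsTo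
      intro e he
      simp only [Finset.coe_sort_coe, Finset.mem_coe] at he ⊢
      by_cases hH' : e ∈ edgeFS H
      · rw [hφH e hH']
        have := hbij.1 (Finset.mem_coe.mpr hH')
        exact (Finset.mem_sdiff.mp (Finset.mem_coe.mp this)).1
      · have heD : e ∈ D := Finset.mem_sdiff.mpr ⟨he, hH'⟩
        rw [hφD e heD]
        exact hSL (hψmem e heD)
    constructor
    · -- InjOn
      intro a ha b hb hab
      simp only [Finset.mem_coe] at ha hb
      by_cases haH : a ∈ edgeFS H <;> by_cases hbH : b ∈ edgeFS H
      · exact hbij.2.1 (Finset.mem_coe.mpr haH) (Finset.mem_coe.mpr hbH)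
          (by rwa [hφH a haH, hφH b hbH] at hab)
      · exfalso
        have hbD : b ∈ D := Finset.mem_sdiff.mpr ⟨hb, hbH⟩
        have h1 : φ a ∈ L' := by rw [hφH a haH]; exact hbij.1 (Finset.mem_coe.mpr haH)
        have h2 : φ b ∈ S := by rw [hφD b hbD]; exact hψmem b hbD
        rw [hab] at h1
        exact (Finset.mem_sdiff.mp (Finset.mem_coe.mp h1)).2 h2
      · exfalso
        have haD : a ∈ D := Finset.mem_sdiff.mpr ⟨ha, haH⟩
        have h1 : φ b ∈ L' := by rw [hφH b hbH]; exact hbij.1 (Finset.mem_coe.mpr hbH)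
        have h2 : φ a ∈ S := by rw [hφD a haD]; exact hψmem a haD
        rw [← hab] at h1
        exact (Finset.mem_sdiff.mp (Finset.mem_coe.mp h1)).2 h2
      · have haD : a ∈ D := Finset.mem_sdiff.mpr ⟨ha, haH⟩
        have hbD : b ∈ D := Finset.mem_sdiff.mpr ⟨hb, hbH⟩
        rw [hφD a haD, hφD b hbD] at hab
        simp only [hψdef, dif_pos haD, dif_pos hbD] at hab
        have : eqv ⟨a, haD⟩ = eqv ⟨b, hbD⟩ := Subtype.ext hab
        have := eqv.injective this
        exact congrArg Subtype.val this
    · -- SurjOn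
      intro x hx
      simp only [Finset.mem_coe] at hx
      by_cases hxS : x ∈ S
      · set p := eqv.symm ⟨x, hxS⟩ with hp
        refine ⟨p.1, Finset.mem_coe.mpr (Finset.mem_sdiff.mp p.2).1, ?_⟩
        rw [hφD p.1 p.2]
        simp only [hψdef, dif_pos p.2]
        have h1 : (⟨p.1, p.2⟩ : {a // a ∈ D}) = p := rfl
        have h2 : eqv p = ⟨x, hxS⟩ := by rw [hp]; exact eqv.apply_symm_apply _
        rw [h1, h2]
      · have hxL' : x ∈ L' := Finset.mem_sdiff.mpr ⟨hx, hxS⟩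
        obtain ⟨e, heH, hex⟩ := hbij.2.2 (Finset.mem_coe.mpr hxL')
        refine ⟨e, Finset.mem_coe.mpr (hsub (Finset.mem_coe.mp heH)), ?_⟩
        rw [hφH e (Finset.mem_coe.mp heH)]; exact hex
  · have : (fun v => w v + vSum G φ v) = fun v => w' v + vSum H φH v := by
      funext v
      rw [hsum v]
      simp only [hw'def]
      ring
    rw [this]
    exact hinj
end
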